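/- arXiv:2201.11468 — 4 statements merged into one kernel-verified Lean document; each statement's English description precedes it below -/
import Mathlib

section
/- (Theorem 1, restricted weak-type form) Let γ = (φ_1, …, φ_r) be a separated system of r polynomials which is not comprised of a single linear polynomial (i.e., if r = 1 then deg φ_1 ≥ 2). Let s ≥ 2 be an integer. Then there exists a constant C > 0, depending only on s and γ, such that for every finite subset 𝒳 ⊆ ℕ and all nonempty finite subsets E, F ⊆ ℤ^r one has ( #{(n, x) ∈ 𝒳 × F : x + γ(n) ∈ E} )^{2s−1} ≤ C · ( |𝒳|^{s−1} + |𝒳| · J̃_{s−1}^γ(𝒳) ) · |E|^s · |F|^s. (This is the restricted weak-type (p, p′) formulation, with p = 2 − 1/s, of the Lorentz bound ‖A_𝒳^γ‖_{ℓ^{p,1}(ℤ^r) → ℓ^{p′,∞}(ℤ^r)} ≤ C |𝒳|^{−1}( |𝒳|^{s−1} + |𝒳| · J̃_{s−1}^γ(𝒳) )^{1/(2s−1)}, where A_𝒳^γ f(x) = |𝒳|^{−1} ∑_{n ∈ 𝒳} f(x + γ(n)).) -/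
/-!
Let `M` be the `F × E` matrix with entries `M x e = #{n ∈ 𝒳 | x + γ(n) = e}`, so that the count
`N` on the left is the sum of the entries of `M`. Cauchy–Schwarz and the log-convexity of the
moments `k ↦ 𝟙 ⬝ (MᵀM)ᵏ 𝟙` give `N^{2s} ≤ |F|^s |E|^{s-1} · w ⬝ (MMᵀ)^{s-1} w` with `w = M 𝟙`.
The entry `(MMᵀ)ᵏ(x, y)` counts chains `x = z₀, …, z_k = y` with `z_i - z_{i-1} ∈ γ(𝒳) - γ(𝒳)`,
so it is at most the number of solutions of the system with right-hand side `y - x`, hence at most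
`J̃_k` when no coordinate of `y - x` vanishes. The pairs where `y` shares a coordinate with `x` are
rare, because each `φ_j` takes every value at most `deg φ_j` times: peeling off the last step,
they cost a factor `r d |𝒳|` times the same quantity at level `k - 1`. Unrolling this recursion
bounds `w ⬝ (MMᵀ)^{s-1} w` by `J̃_{s-1} N² + |𝒳|^{s-1} |E| N` up to constants, and dividing by `N`
gives the theorem.
-/

open Finset Matrix Polynomial

namespace Finset

lemma sum_card_fiber_mul_le {ι κ : Type*} [DecidableEq κ] (s : Finset ι) (t : Finset κ)
    (g : ι → κ) (f : κ → ℕ) :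
    ∑ j ∈ t, #{i ∈ s | g i = j} * f j ≤ ∑ i ∈ s, f (g i) := by
  calc ∑ j ∈ t, #{i ∈ s | g i = j} * f j = ∑ i ∈ s with g i ∈ t, f (g i) := by
        simp_rw [← sum_fiberwise_eq_sum_filter', sum_const, smul_eq_mul]
    _ ≤ ∑ i ∈ s, f (g i) := sum_le_sum_of_subset (filter_subset _ _)

end Finset

lemma pow_le_pow_mul_of_forall_sq_le_mul {R : Type*} [CommSemiring R] [LinearOrder R]
    [IsStrictOrderedRing R] (u : ℕ → R) (hu : ∀ k, 0 ≤ u k)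
    (h : ∀ k, u (k + 1) ^ 2 ≤ u k * u (k + 2)) (k : ℕ) :
    u 1 ^ (k + 1) ≤ u 0 ^ k * u (k + 1) := by
  have ratio (k : ℕ) : u 1 * u k ≤ u 0 * u (k + 1) := by
    induction k with
    | zero => rw [mul_comm]
    | succ k ih =>
      rcases (hu (k + 1)).eq_or_lt with h0 | hpos
      · rw [← h0, mul_zero]
        exact mul_nonneg (hu 0) (hu _)
      · refine le_of_mul_le_mul_left ?_ hpos
        calc u (k + 1) * (u 1 * u (k + 1)) = u 1 * u (k + 1) ^ 2 := by ring
          _ ≤ u 1 * (u k * u (k + 2)) := mul_le_mul_of_nonneg_left (h k) (hu 1)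
          _ = (u 1 * u k) * u (k + 2) := by ring
          _ ≤ (u 0 * u (k + 1)) * u (k + 2) := mul_le_mul_of_nonneg_right ih (hu _)
          _ = u (k + 1) * (u 0 * u (k + 2)) := by ring
  induction k with
  | zero => simp
  | succ k ih =>
    calc u 1 ^ (k + 2) = u 1 ^ (k + 1) * u 1 := pow_succ _ _
      _ ≤ u 0 ^ k * u (k + 1) * u 1 := mul_le_mul_of_nonneg_right ih (hu 1)
      _ = u 0 ^ k * (u 1 * u (k + 1)) := by ring
      _ ≤ u 0 ^ k * (u 0 * u (k + 2)) :=
          mul_le_mul_of_nonneg_left (ratio _) (pow_nonneg (hu 0) _)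
      _ = u 0 ^ (k + 1) * u (k + 2) := by ring

namespace Matrix

variable {R m n : Type*} [CommSemiring R] [Fintype m] [Fintype n]

lemma IsSymm.mulVec_dotProduct {A : Matrix n n R} (hA : A.IsSymm) (u v : n → R) :
    (A *ᵥ u) ⬝ᵥ v = u ⬝ᵥ (A *ᵥ v) := by
  rw [dotProduct_comm, dotProduct_mulVec, ← mulVec_transpose, hA.eq, dotProduct_comm]

lemma mulVec_dotProduct_mulVec (M : Matrix m n R) (u v : n → R) :
    (M *ᵥ u) ⬝ᵥ (M *ᵥ v) = u ⬝ᵥ ((Mᵀ * M) *ᵥ v) := by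
  rw [← mulVec_mulVec, dotProduct_mulVec u, vecMul_transpose]

lemma mulVec_dotProduct_mulVec_mulVec (M : Matrix m n R) (B : Matrix m m R) (u v : n → R) :
    (M *ᵥ u) ⬝ᵥ (B *ᵥ (M *ᵥ v)) = u ⬝ᵥ ((Mᵀ * B * M) *ᵥ v) := by
  rw [← mulVec_mulVec, ← mulVec_mulVec, dotProduct_mulVec u, vecMul_transpose]

lemma transpose_mul_self_pow_succ [DecidableEq m] [DecidableEq n] (M : Matrix m n R) (k : ℕ) :
    (Mᵀ * M) ^ (k + 1) = Mᵀ * (M * Mᵀ) ^ k * M := by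
  induction k with
  | zero => simp
  | succ k ih => simp only [pow_succ _ (k + 1), ih, pow_succ, Matrix.mul_assoc]

lemma gram_pow_mulVec_dotProduct [DecidableEq n] (M : Matrix m n R) (u : n → R) (a b : ℕ) :
    ((Mᵀ * M) ^ a *ᵥ u) ⬝ᵥ ((Mᵀ * M) ^ b *ᵥ u) = u ⬝ᵥ ((Mᵀ * M) ^ (a + b) *ᵥ u) := by
  have hA : (Mᵀ * M).IsSymm := by rw [IsSymm, transpose_mul, transpose_transpose]
  rw [(hA.pow a).mulVec_dotProduct, mulVec_mulVec, pow_add]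

lemma mulVec_gram_pow_mulVec_dotProduct [DecidableEq n] (M : Matrix m n R) (u : n → R)
    (a b : ℕ) :
    (M *ᵥ ((Mᵀ * M) ^ a *ᵥ u)) ⬝ᵥ (M *ᵥ ((Mᵀ * M) ^ b *ᵥ u))
      = u ⬝ᵥ ((Mᵀ * M) ^ (a + b + 1) *ᵥ u) := by
  rw [mulVec_dotProduct_mulVec, mulVec_mulVec, ← pow_succ', gram_pow_mulVec_dotProduct,
    add_assoc]

variable [LinearOrder R] [IsStrictOrderedRing R] [ExistsAddOfLE R]

lemma dotProduct_sq_le (u v : n → R) : (u ⬝ᵥ v) ^ 2 ≤ (u ⬝ᵥ u) * (v ⬝ᵥ v) := by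
  simpa only [dotProduct, sq] using sum_mul_sq_le_sq_mul_sq univ u v

variable [DecidableEq n]

lemma gram_pow_moment_nonneg (M : Matrix m n R) (u : n → R) (k : ℕ) :
    0 ≤ u ⬝ᵥ ((Mᵀ * M) ^ k *ᵥ u) := by
  obtain ⟨j, rfl | rfl⟩ := Nat.even_or_odd' k
  · rw [two_mul, ← gram_pow_mulVec_dotProduct]
    exact sum_nonneg fun i _ => mul_self_nonneg _
  · rw [two_mul, ← mulVec_gram_pow_mulVec_dotProduct]
    exact sum_nonneg fun i _ => mul_self_nonneg _

lemma gram_pow_moment_sq_le (M : Matrix m n R) (u : n → R) (k : ℕ) :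
    (u ⬝ᵥ ((Mᵀ * M) ^ (k + 1) *ᵥ u)) ^ 2
      ≤ (u ⬝ᵥ ((Mᵀ * M) ^ k *ᵥ u)) * (u ⬝ᵥ ((Mᵀ * M) ^ (k + 2) *ᵥ u)) := by
  -- `A = MᵀM`; Cauchy–Schwarz on `(Aʲu, Aʲ⁺¹u)` for `k = 2j`, on `(MAʲu, MAʲ⁺¹u)` for `k = 2j + 1`
  obtain ⟨j, rfl | rfl⟩ := Nat.even_or_odd' k
  · have := dotProduct_sq_le ((Mᵀ * M) ^ j *ᵥ u) ((Mᵀ * M) ^ (j + 1) *ᵥ u)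
    simp only [gram_pow_mulVec_dotProduct] at this
    rwa [show j + (j + 1) = 2 * j + 1 by ring, show j + j = 2 * j by ring,
      show j + 1 + (j + 1) = 2 * j + 2 by ring] at this
  · have := dotProduct_sq_le (M *ᵥ ((Mᵀ * M) ^ j *ᵥ u)) (M *ᵥ ((Mᵀ * M) ^ (j + 1) *ᵥ u))
    simp only [mulVec_gram_pow_mulVec_dotProduct] at this
    rwa [show j + (j + 1) + 1 = 2 * j + 1 + 1 by ring, show j + j + 1 = 2 * j + 1 by ring,
      show j + 1 + (j + 1) + 1 = 2 * j + 1 + 2 by ring] at this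

theorem one_dotProduct_mulVec_one_pow_le [DecidableEq m] (M : Matrix m n R) (k : ℕ) :
    ((1 : m → R) ⬝ᵥ (M *ᵥ 1)) ^ (2 * k + 2)
      ≤ (Fintype.card m : R) ^ (k + 1) * (Fintype.card n : R) ^ k
        * ((M *ᵥ 1) ⬝ᵥ ((M * Mᵀ) ^ k *ᵥ (M *ᵥ 1))) := by
  set c : ℕ → R := fun t => (1 : n → R) ⬝ᵥ ((Mᵀ * M) ^ t *ᵥ 1)
  have cauchy_schwarz : ((1 : m → R) ⬝ᵥ (M *ᵥ 1)) ^ 2 ≤ Fintype.card m * c 1 := by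
    simpa only [c, one_dotProduct_one, mulVec_dotProduct_mulVec, pow_one] using
      dotProduct_sq_le 1 (M *ᵥ 1)
  have log_convex : c 1 ^ (k + 1) ≤ c 0 ^ k * c (k + 1) :=
    pow_le_pow_mul_of_forall_sq_le_mul c (gram_pow_moment_nonneg M 1)
      (gram_pow_moment_sq_le M 1) k
  have hc0 : c 0 = Fintype.card n := by simp only [c, pow_zero, one_mulVec, one_dotProduct_one]
  have hc : c (k + 1) = (M *ᵥ 1) ⬝ᵥ ((M * Mᵀ) ^ k *ᵥ (M *ᵥ 1)) := by
    simp only [c, transpose_mul_self_pow_succ, mulVec_dotProduct_mulVec_mulVec]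
  calc ((1 : m → R) ⬝ᵥ (M *ᵥ 1)) ^ (2 * k + 2) = (((1 : m → R) ⬝ᵥ (M *ᵥ 1)) ^ 2) ^ (k + 1) := by
        ring
    _ ≤ (Fintype.card m * c 1) ^ (k + 1) := pow_le_pow_left₀ (sq_nonneg _) cauchy_schwarz _
    _ = (Fintype.card m : R) ^ (k + 1) * c 1 ^ (k + 1) := mul_pow _ _ _
    _ ≤ (Fintype.card m : R) ^ (k + 1) * (c 0 ^ k * c (k + 1)) :=
        mul_le_mul_of_nonneg_left log_convex (by positivity)
    _ = _ := by rw [hc0, hc, mul_assoc]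

end Matrix

lemma Polynomial.card_filter_eval_eq_le_natDegree (ψ : ℤ[X]) (hψ : 0 < ψ.natDegree)
    (𝒳 : Finset ℕ) (c : ℤ) : #{n ∈ 𝒳 | ψ.eval ((n : ℕ) : ℤ) = c} ≤ ψ.natDegree := by
  have hne : ψ - C c ≠ 0 := fun h => by
    have := natDegree_sub_C (p := ψ) (a := c)
    rw [h, natDegree_zero] at this
    omega
  calc #{n ∈ 𝒳 | ψ.eval ((n : ℕ) : ℤ) = c}
      = #({n ∈ 𝒳 | ψ.eval ((n : ℕ) : ℤ) = c}.map Nat.castEmbedding) := (card_map _).symm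
    _ ≤ (ψ - C c).natDegree := card_le_degree_of_subset_roots fun z hz => by
        obtain ⟨n, hn, rfl⟩ := Multiset.mem_map.mp hz
        rw [mem_roots hne, IsRoot, eval_sub, eval_C, sub_eq_zero]
        exact (mem_filter.mp hn).2
    _ = ψ.natDegree := natDegree_sub_C

lemma le_pow_mul_of_le_add_mul {b c : ℕ → ℕ} {A D X : ℕ} (h0 : b 0 ≤ A)
    (hc : ∀ k, X * c k ≤ c (k + 1)) (hb : ∀ k, b (k + 1) ≤ c (k + 1) + D * X * b k) (k : ℕ) :
    b k ≤ (D + 1) ^ k * (c k + X ^ k * A) := by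
  induction k with
  | zero => simpa using h0.trans (Nat.le_add_left _ _)
  | succ k ih =>
    have hD : 1 + D * (D + 1) ^ k ≤ (D + 1) ^ (k + 1) := by
      rw [pow_succ, mul_add_one, add_comm, mul_comm D]
      exact Nat.add_le_add_left (Nat.one_le_pow _ _ (Nat.succ_pos D)) _
    calc b (k + 1) ≤ c (k + 1) + D * X * ((D + 1) ^ k * (c k + X ^ k * A)) :=
          (hb k).trans (Nat.add_le_add_left (Nat.mul_le_mul_left _ ih) _)
      _ = c (k + 1) + D * (D + 1) ^ k * (X * c k) + D * (D + 1) ^ k * (X ^ (k + 1) * A) := by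
          ring
      _ ≤ (1 + D * (D + 1) ^ k) * c (k + 1) + (D + 1) ^ (k + 1) * (X ^ (k + 1) * A) := by
          have h1 := Nat.mul_le_mul_left (D * (D + 1) ^ k) (hc k)
          have h2 := Nat.mul_le_mul_right (X ^ (k + 1) * A) (hD.trans' (Nat.le_add_left _ 1))
          linarith
      _ ≤ (D + 1) ^ (k + 1) * (c (k + 1) + X ^ (k + 1) * A) := by
          have := Nat.mul_le_mul_right (c (k + 1)) hD
          rw [mul_add]
          linarith

namespace CurveIncidence

variable {r : ℕ}

section Solutions

variable (γ : ℕ → Fin r → ℤ) (𝒳 : Finset ℕ)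

def solutions (k : ℕ) (a : Fin r → ℤ) : Finset ((Fin k → ℕ) × (Fin k → ℕ)) :=
  {q ∈ Fintype.piFinset (fun _ => 𝒳) ×ˢ Fintype.piFinset (fun _ => 𝒳) |
    ∑ i, (γ (q.2 i) - γ (q.1 i)) = a}

noncomputable def maxSolutions (k : ℕ) : ℕ :=
  sSup {m | ∃ a : Fin r → ℤ, (∀ j, a j ≠ 0) ∧ m = #(solutions γ 𝒳 k a)}

lemma card_solutions_zero : #(solutions γ 𝒳 0 0) = 1 := by
  rw [card_eq_one]
  refine ⟨(Fin.elim0, Fin.elim0), ?_⟩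
  ext q
  simp [solutions, Prod.ext_iff, funext_iff]

lemma card_solutions_succ (k : ℕ) (a : Fin r → ℤ) :
    #(solutions γ 𝒳 (k + 1) a) = ∑ p ∈ 𝒳 ×ˢ 𝒳, #(solutions γ 𝒳 k (a - (γ p.2 - γ p.1))) := by
  rw [← card_sigma]
  symm
  refine card_nbij' (fun q => (Fin.cons q.1.1 q.2.1, Fin.cons q.1.2 q.2.2))
    (fun q => ⟨(q.1 0, q.2 0), (Fin.tail q.1, Fin.tail q.2)⟩) ?_ ?_ ?_ ?_
  · rintro ⟨⟨m, n⟩, u, v⟩ h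
    simp only [coe_sigma, Set.mem_sigma_iff, mem_coe, mem_product, solutions, mem_filter,
      Fintype.mem_piFinset] at h ⊢
    obtain ⟨⟨hm, hn⟩, ⟨hu, hv⟩, hsum⟩ := h
    simp only [Fin.forall_fin_succ, Fin.cons_zero, Fin.cons_succ, Fin.sum_univ_succ, hsum]
    exact ⟨⟨⟨hm, hu⟩, ⟨hn, hv⟩⟩, by abel⟩
  · rintro ⟨u, v⟩ h
    simp only [coe_sigma, Set.mem_sigma_iff, mem_coe, mem_product, solutions, mem_filter,
      Fintype.mem_piFinset, Fin.forall_fin_succ, Fin.sum_univ_succ] at h ⊢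
    refine ⟨⟨h.1.1.1, h.1.2.1⟩, ⟨h.1.1.2, h.1.2.2⟩, ?_⟩
    rw [← h.2]
    simp only [Fin.tail]
    abel
  · rintro ⟨⟨m, n⟩, u, v⟩ -
    simp
  · rintro ⟨u, v⟩ -
    simp

lemma card_mul_card_solutions_le (k : ℕ) (a : Fin r → ℤ) :
    #𝒳 * #(solutions γ 𝒳 k a) ≤ #(solutions γ 𝒳 (k + 1) a) := by
  calc #𝒳 * #(solutions γ 𝒳 k a)
      = ∑ p ∈ 𝒳.diag, #(solutions γ 𝒳 k (a - (γ p.2 - γ p.1))) := by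
        rw [← diag_card, ← smul_eq_mul, ← sum_const]
        refine sum_congr rfl fun p hp => ?_
        rw [(mem_diag.mp hp).2, sub_self, sub_zero]
    _ ≤ ∑ p ∈ 𝒳 ×ˢ 𝒳, #(solutions γ 𝒳 k (a - (γ p.2 - γ p.1))) :=
        sum_le_sum_of_subset (by rw [diag_eq_filter]; exact filter_subset _ _)
    _ = #(solutions γ 𝒳 (k + 1) a) := (card_solutions_succ γ 𝒳 k a).symm

lemma bddAbove_card_solutions (k : ℕ) :
    BddAbove {m | ∃ a : Fin r → ℤ, (∀ j, a j ≠ 0) ∧ m = #(solutions γ 𝒳 k a)} :=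
  ⟨_, by rintro m ⟨a, -, rfl⟩; exact card_filter_le _ _⟩

lemma card_solutions_le_maxSolutions {k : ℕ} {a : Fin r → ℤ} (ha : ∀ j, a j ≠ 0) :
    #(solutions γ 𝒳 k a) ≤ maxSolutions γ 𝒳 k :=
  le_csSup (bddAbove_card_solutions γ 𝒳 k) ⟨a, ha, rfl⟩

lemma card_mul_maxSolutions_le (k : ℕ) :
    #𝒳 * maxSolutions γ 𝒳 k ≤ maxSolutions γ 𝒳 (k + 1) := by
  have hne : {m | ∃ a : Fin r → ℤ, (∀ j, a j ≠ 0) ∧ m = #(solutions γ 𝒳 k a)}.Nonempty :=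
    ⟨_, fun _ => 1, fun _ => one_ne_zero, rfl⟩
  obtain ⟨a, ha, hmax⟩ := Nat.sSup_mem hne (bddAbove_card_solutions γ 𝒳 k)
  rw [maxSolutions, hmax]
  exact (card_mul_card_solutions_le γ 𝒳 k a).trans (card_solutions_le_maxSolutions γ 𝒳 ha)

lemma maxSolutions_eval_eq (φ : Fin r → ℤ[X]) (k : ℕ) :
    sSup {m : ℕ | ∃ a : Fin r → ℤ, (∀ j, a j ≠ 0) ∧
      m = (((Fintype.piFinset fun _ : Fin k => 𝒳) ×ˢ (Fintype.piFinset fun _ : Fin k => 𝒳)).filter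
        (fun q => ∀ j, ∑ i, ((φ j).eval (q.2 i : ℤ) - (φ j).eval (q.1 i : ℤ)) = a j)).card}
      = maxSolutions (fun n j => (φ j).eval (n : ℤ)) 𝒳 k := by
  simp only [maxSolutions, solutions, funext_iff, Finset.sum_apply, Pi.sub_apply]

end Solutions

section Incidence

variable (γ : ℕ → Fin r → ℤ) (𝒳 : Finset ℕ) (E F : Finset (Fin r → ℤ))

def incidence : Matrix F E ℕ := fun x e => #{n ∈ 𝒳 | (x : Fin r → ℤ) + γ n = e}

variable {γ 𝒳 E F}

lemma sum_incidence_row_mul_le (x : F) (g : (Fin r → ℤ) → ℕ) :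
    ∑ e, incidence γ 𝒳 E F x e * g e ≤ ∑ m ∈ 𝒳, g (x + γ m) :=
  (sum_coe_sort E fun e => #{n ∈ 𝒳 | (x : Fin r → ℤ) + γ n = e} * g e).trans_le
    (sum_card_fiber_mul_le 𝒳 E _ g)

lemma sum_incidence_col_mul_le (e : E) (f : (Fin r → ℤ) → ℕ) :
    ∑ z, incidence γ 𝒳 E F z e * f z ≤ ∑ n ∈ 𝒳, f (e - γ n) := by
  have h : ∀ z : F, incidence γ 𝒳 E F z e = #{n ∈ 𝒳 | (e : Fin r → ℤ) - γ n = z} := fun z =>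
    congrArg card (filter_congr fun n _ => eq_sub_iff_add_eq.symm.trans eq_comm)
  simp_rw [h]
  exact (sum_coe_sort F fun z => #{n ∈ 𝒳 | (e : Fin r → ℤ) - γ n = z} * f z).trans_le
    (sum_card_fiber_mul_le 𝒳 F _ f)

lemma incidence_mulVec_one_apply (x : F) :
    (incidence γ 𝒳 E F *ᵥ 1) x = #{n ∈ 𝒳 | (x : Fin r → ℤ) + γ n ∈ E} := by
  simp only [mulVec, dotProduct, Pi.one_apply, mul_one, incidence]
  rw [sum_coe_sort E fun e => #{n ∈ 𝒳 | (x : Fin r → ℤ) + γ n = e},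
    sum_card_fiberwise_eq_card_filter]

lemma sum_incidence_mulVec_one :
    ∑ x, (incidence γ 𝒳 E F *ᵥ 1) x = #{p ∈ 𝒳 ×ˢ F | p.2 + γ p.1 ∈ E} := by
  simp_rw [incidence_mulVec_one_apply]
  rw [sum_coe_sort F fun x => #{n ∈ 𝒳 | x + γ n ∈ E}, card_filter, sum_product_right]
  simp_rw [card_filter]

lemma incidence_mulVec_one_le_card (x : F) : (incidence γ 𝒳 E F *ᵥ 1) x ≤ #𝒳 := by
  rw [incidence_mulVec_one_apply]
  exact card_filter_le _ _

lemma sum_incidence_mulVec_one_le : ∑ x, (incidence γ 𝒳 E F *ᵥ 1) x ≤ #𝒳 * #E := by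
  calc ∑ x, (incidence γ 𝒳 E F *ᵥ 1) x = ∑ e, ∑ x, incidence γ 𝒳 E F x e * 1 := by
        simp only [mulVec, dotProduct, Pi.one_apply]
        exact sum_comm
    _ ≤ ∑ _e : E, ∑ _n ∈ 𝒳, 1 := sum_le_sum fun e _ => sum_incidence_col_mul_le e 1
    _ = #𝒳 * #E := by simp [mul_comm]

lemma incidence_mul_transpose_pow_apply_le (k : ℕ) (x y : F) :
    ((incidence γ 𝒳 E F * (incidence γ 𝒳 E F)ᵀ) ^ k) x y ≤ #(solutions γ 𝒳 k (y - x)) := by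
  set M := incidence γ 𝒳 E F
  induction k generalizing x with
  | zero =>
    rw [pow_zero, one_apply]
    split_ifs with h
    · rw [h, sub_self, card_solutions_zero]
    · exact Nat.zero_le _
  | succ k ih =>
    calc ((M * Mᵀ) ^ (k + 1)) x y = ∑ z, (M * Mᵀ) x z * ((M * Mᵀ) ^ k) z y := by
          rw [pow_succ', mul_apply]
      _ ≤ ∑ z, (M * Mᵀ) x z * #(solutions γ 𝒳 k (y - z)) :=
          sum_le_sum fun z _ => Nat.mul_le_mul_left _ (ih z)
      _ = ∑ e, M x e * ∑ z, M z e * #(solutions γ 𝒳 k (y - z)) := by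
          simp_rw [mul_apply, transpose_apply, sum_mul, mul_sum, mul_assoc]
          exact sum_comm
      _ ≤ ∑ e, M x e * ∑ n ∈ 𝒳, #(solutions γ 𝒳 k (y - (e - γ n))) :=
          sum_le_sum fun e _ => Nat.mul_le_mul_left _
            (sum_incidence_col_mul_le e fun z => #(solutions γ 𝒳 k (y - z)))
      _ ≤ ∑ m ∈ 𝒳, ∑ n ∈ 𝒳, #(solutions γ 𝒳 k (y - (x + γ m - γ n))) :=
          sum_incidence_row_mul_le x fun e => ∑ n ∈ 𝒳, #(solutions γ 𝒳 k (y - (e - γ n)))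
      _ = #(solutions γ 𝒳 (k + 1) (y - x)) := by
          rw [card_solutions_succ, sum_product_right]
          refine sum_congr rfl fun m _ => sum_congr rfl fun n _ => ?_
          congr 2
          abel

variable {d : ℕ}

lemma incidence_le {j : Fin r} (hfib : ∀ c, #{n ∈ 𝒳 | γ n j = c} ≤ d) (x : F) (e : E) :
    incidence γ 𝒳 E F x e ≤ d := by
  refine (card_le_card fun n hn => ?_).trans (hfib ((e : Fin r → ℤ) j - (x : Fin r → ℤ) j))
  rw [mem_filter] at hn ⊢
  refine ⟨hn.1, ?_⟩
  rw [← hn.2, Pi.add_apply, add_sub_cancel_left]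

lemma dotProduct_incidence_mulVec_one_le {j : Fin r} (hfib : ∀ c, #{n ∈ 𝒳 | γ n j = c} ≤ d) :
    (incidence γ 𝒳 E F *ᵥ 1) ⬝ᵥ (incidence γ 𝒳 E F *ᵥ 1)
      ≤ d * #E * ∑ x, (incidence γ 𝒳 E F *ᵥ 1) x := by
  have row_bound (x : F) : (incidence γ 𝒳 E F *ᵥ 1) x ≤ d * #E := by
    calc (incidence γ 𝒳 E F *ᵥ 1) x = ∑ e, incidence γ 𝒳 E F x e := by
          simp [mulVec, dotProduct]
      _ ≤ ∑ _e : E, d := sum_le_sum fun e _ => incidence_le hfib x e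
      _ = d * #E := by rw [sum_const, card_univ, Fintype.card_coe, smul_eq_mul, mul_comm]
  rw [dotProduct, mul_sum]
  exact sum_le_sum fun x _ => Nat.mul_le_mul_right _ (row_bound x)

def sharingCoord (x : F) : Finset F := {y | ∃ j, (x : Fin r → ℤ) j = (y : Fin r → ℤ) j}

lemma sum_sharingCoord_incidence_le (hfib : ∀ j c, #{n ∈ 𝒳 | γ n j = c} ≤ d) (x : F) (e : E) :
    ∑ y ∈ sharingCoord x, incidence γ 𝒳 E F y e ≤ r * d := by
  calc ∑ y ∈ sharingCoord x, incidence γ 𝒳 E F y e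
      = ∑ y, incidence γ 𝒳 E F y e *
          if ∃ j, (x : Fin r → ℤ) j = (y : Fin r → ℤ) j then 1 else 0 := by
        rw [sharingCoord, sum_filter]
        simp_rw [mul_ite, mul_one, mul_zero]
    _ ≤ ∑ n ∈ 𝒳, if ∃ j, (x : Fin r → ℤ) j = ((e : Fin r → ℤ) - γ n) j then 1 else 0 :=
        sum_incidence_col_mul_le e fun y => if ∃ j, (x : Fin r → ℤ) j = y j then 1 else 0
    _ ≤ #(univ.biUnion fun j => {n ∈ 𝒳 | γ n j = (e : Fin r → ℤ) j - (x : Fin r → ℤ) j}) := by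
        rw [← card_filter]
        refine card_le_card fun n hn => ?_
        simp only [mem_filter, mem_biUnion, mem_univ, true_and, Pi.sub_apply] at hn ⊢
        obtain ⟨hn, j, hj⟩ := hn
        exact ⟨j, hn, by rw [hj]; abel⟩
    _ ≤ ∑ _j : Fin r, d := card_biUnion_le.trans (sum_le_sum fun j _ => hfib j _)
    _ = r * d := by rw [sum_const, card_univ, Fintype.card_fin, smul_eq_mul]

lemma sum_sharingCoord_incidence_mul_transpose_le (hfib : ∀ j c, #{n ∈ 𝒳 | γ n j = c} ≤ d)
    (x z : F) :
    ∑ y ∈ sharingCoord x, (incidence γ 𝒳 E F * (incidence γ 𝒳 E F)ᵀ) z y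
      ≤ r * d * (incidence γ 𝒳 E F *ᵥ 1) z := by
  set M := incidence γ 𝒳 E F
  calc ∑ y ∈ sharingCoord x, (M * Mᵀ) z y = ∑ e, M z e * ∑ y ∈ sharingCoord x, M y e := by
        simp_rw [mul_apply, transpose_apply, mul_sum]
        exact sum_comm
    _ ≤ ∑ e, M z e * (r * d) :=
        sum_le_sum fun e _ => Nat.mul_le_mul_left _ (sum_sharingCoord_incidence_le hfib x e)
    _ = r * d * (M *ᵥ 1) z := by
        simp only [mulVec, dotProduct, Pi.one_apply, mul_one, mul_sum]
        exact sum_congr rfl fun e _ => mul_comm _ _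

lemma incidence_mul_transpose_pow_succ_mulVec_le (hfib : ∀ j c, #{n ∈ 𝒳 | γ n j = c} ≤ d)
    (k : ℕ) (x : F) :
    ((incidence γ 𝒳 E F * (incidence γ 𝒳 E F)ᵀ) ^ (k + 1) *ᵥ (incidence γ 𝒳 E F *ᵥ 1)) x
      ≤ maxSolutions γ 𝒳 (k + 1) * ∑ y, (incidence γ 𝒳 E F *ᵥ 1) y
        + r * d * #𝒳 * ((incidence γ 𝒳 E F * (incidence γ 𝒳 E F)ᵀ) ^ k
          *ᵥ (incidence γ 𝒳 E F *ᵥ 1)) x := by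
  set M := incidence γ 𝒳 E F
  set K := M * Mᵀ
  set w := M *ᵥ 1
  have distinct_coords : ∑ y ∈ (sharingCoord x)ᶜ, (K ^ (k + 1)) x y * w y
      ≤ maxSolutions γ 𝒳 (k + 1) * ∑ y, w y := by
    rw [mul_sum]
    refine (sum_le_sum fun y hy => Nat.mul_le_mul_right _ ?_).trans
      (sum_le_sum_of_subset (subset_univ _))
    refine (incidence_mul_transpose_pow_apply_le _ x y).trans
      (card_solutions_le_maxSolutions γ 𝒳 fun j => sub_ne_zero.mpr fun hj => ?_)
    simp only [mem_compl, sharingCoord, mem_filter, mem_univ, true_and, not_exists] at hy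
    exact hy j hj.symm
  have shared_coord : ∑ y ∈ sharingCoord x, (K ^ (k + 1)) x y * w y
      ≤ r * d * #𝒳 * (K ^ k *ᵥ w) x := by
    calc ∑ y ∈ sharingCoord x, (K ^ (k + 1)) x y * w y
        ≤ ∑ y ∈ sharingCoord x, (K ^ (k + 1)) x y * #𝒳 :=
          sum_le_sum fun y _ => Nat.mul_le_mul_left _ (incidence_mulVec_one_le_card y)
      _ = #𝒳 * ∑ z, (K ^ k) x z * ∑ y ∈ sharingCoord x, K z y := by
          simp_rw [pow_succ, mul_apply, sum_mul, mul_sum]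
          rw [sum_comm]
          exact sum_congr rfl fun z _ => sum_congr rfl fun y _ => by ring
      _ ≤ #𝒳 * ∑ z, (K ^ k) x z * (r * d * w z) := Nat.mul_le_mul_left _ <|
          sum_le_sum fun z _ => Nat.mul_le_mul_left _
            (sum_sharingCoord_incidence_mul_transpose_le hfib x z)
      _ = r * d * #𝒳 * (K ^ k *ᵥ w) x := by
          simp only [mulVec, dotProduct, mul_sum]
          exact sum_congr rfl fun z _ => by ring
  calc (K ^ (k + 1) *ᵥ w) x
      = ∑ y ∈ (sharingCoord x)ᶜ, (K ^ (k + 1)) x y * w y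
        + ∑ y ∈ sharingCoord x, (K ^ (k + 1)) x y * w y := by
        rw [sum_compl_add_sum]
        rfl
    _ ≤ _ := add_le_add distinct_coords shared_coord

lemma dotProduct_incidence_mul_transpose_pow_succ_le (hfib : ∀ j c, #{n ∈ 𝒳 | γ n j = c} ≤ d)
    (k : ℕ) :
    (incidence γ 𝒳 E F *ᵥ 1) ⬝ᵥ ((incidence γ 𝒳 E F * (incidence γ 𝒳 E F)ᵀ) ^ (k + 1)
        *ᵥ (incidence γ 𝒳 E F *ᵥ 1))
      ≤ maxSolutions γ 𝒳 (k + 1) * (∑ y, (incidence γ 𝒳 E F *ᵥ 1) y) ^ 2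
        + r * d * #𝒳 * ((incidence γ 𝒳 E F *ᵥ 1) ⬝ᵥ
          ((incidence γ 𝒳 E F * (incidence γ 𝒳 E F)ᵀ) ^ k *ᵥ (incidence γ 𝒳 E F *ᵥ 1))) := by
  set w := incidence γ 𝒳 E F *ᵥ 1
  calc w ⬝ᵥ ((incidence γ 𝒳 E F * (incidence γ 𝒳 E F)ᵀ) ^ (k + 1) *ᵥ w)
      ≤ ∑ x, w x * (maxSolutions γ 𝒳 (k + 1) * ∑ y, w y + r * d * #𝒳 *
          ((incidence γ 𝒳 E F * (incidence γ 𝒳 E F)ᵀ) ^ k *ᵥ w) x) :=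
        sum_le_sum fun x _ => Nat.mul_le_mul_left _
          (incidence_mul_transpose_pow_succ_mulVec_le hfib k x)
    _ = _ := by
        simp only [dotProduct, mul_add, sum_add_distrib]
        rw [← sum_mul]
        simp_rw [mul_left_comm (w _) (r * d * #𝒳), ← mul_sum]
        ring

lemma dotProduct_incidence_mul_transpose_pow_le (hr : 0 < r)
    (hfib : ∀ j c, #{n ∈ 𝒳 | γ n j = c} ≤ d) (k : ℕ) :
    (incidence γ 𝒳 E F *ᵥ 1) ⬝ᵥ ((incidence γ 𝒳 E F * (incidence γ 𝒳 E F)ᵀ) ^ k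
        *ᵥ (incidence γ 𝒳 E F *ᵥ 1))
      ≤ (r * d + 1) ^ k * (maxSolutions γ 𝒳 k * (∑ x, (incidence γ 𝒳 E F *ᵥ 1) x) ^ 2
        + #𝒳 ^ k * (d * #E * ∑ x, (incidence γ 𝒳 E F *ᵥ 1) x)) := by
  set M := incidence γ 𝒳 E F
  refine le_pow_mul_of_le_add_mul (b := fun k => (M *ᵥ 1) ⬝ᵥ ((M * Mᵀ) ^ k *ᵥ (M *ᵥ 1)))
    (c := fun k => maxSolutions γ 𝒳 k * (∑ x, (M *ᵥ 1) x) ^ 2) ?_ (fun k => ?_)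
    (dotProduct_incidence_mul_transpose_pow_succ_le hfib) k
  · rw [pow_zero, one_mulVec]
    exact dotProduct_incidence_mulVec_one_le (j := ⟨0, hr⟩) (hfib _)
  · rw [← mul_assoc]
    exact Nat.mul_le_mul_right _ (card_mul_maxSolutions_le γ 𝒳 k)

variable (γ 𝒳 E F) in
theorem card_incidences_pow_le (hr : 0 < r) (hfib : ∀ j c, #{n ∈ 𝒳 | γ n j = c} ≤ d) (k : ℕ) :
    #{p ∈ 𝒳 ×ˢ F | p.2 + γ p.1 ∈ E} ^ (2 * k + 1)
      ≤ (r * d + 1) ^ k * (d + 1) * (#𝒳 ^ k + #𝒳 * maxSolutions γ 𝒳 k)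
        * #E ^ (k + 1) * #F ^ (k + 1) := by
  set M := incidence γ 𝒳 E F
  set N := #{p ∈ 𝒳 ×ˢ F | p.2 + γ p.1 ∈ E}
  set J := maxSolutions γ 𝒳 k
  have hN : ∑ x, (M *ᵥ 1) x = N := sum_incidence_mulVec_one
  have hN_le : N ≤ #𝒳 * #E := hN ▸ sum_incidence_mulVec_one_le
  have tt_star := one_dotProduct_mulVec_one_pow_le M k
  rw [one_dotProduct, hN, Fintype.card_coe, Fintype.card_coe, Nat.cast_id, Nat.cast_id] at tt_star
  have walk_bound := dotProduct_incidence_mul_transpose_pow_le (E := E) (F := F) hr hfib k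
  rw [hN] at walk_bound
  rcases Nat.eq_zero_or_pos N with hN0 | hNpos
  · rw [hN0, zero_pow (by omega)]
    exact Nat.zero_le _
  refine Nat.le_of_mul_le_mul_right ?_ hNpos
  calc N ^ (2 * k + 1) * N = N ^ (2 * k + 2) := by ring
    _ ≤ #F ^ (k + 1) * #E ^ k * ((M *ᵥ 1) ⬝ᵥ ((M * Mᵀ) ^ k *ᵥ (M *ᵥ 1))) := tt_star
    _ ≤ #F ^ (k + 1) * #E ^ k * ((r * d + 1) ^ k * (J * (N * N) + #𝒳 ^ k * (d * #E * N))) := by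
        rw [← sq]
        gcongr
    _ ≤ #F ^ (k + 1) * #E ^ k * ((r * d + 1) ^ k * (J * (#𝒳 * #E * N) + #𝒳 ^ k * (d * #E * N))) := by
        gcongr
    _ = (r * d + 1) ^ k * (#𝒳 * J + #𝒳 ^ k * d) * #E ^ (k + 1) * #F ^ (k + 1) * N := by ring
    _ ≤ (r * d + 1) ^ k * ((d + 1) * (#𝒳 ^ k + #𝒳 * J)) * #E ^ (k + 1) * #F ^ (k + 1) * N := by
        gcongr
        nlinarith [Nat.zero_le (d * (#𝒳 * J)), Nat.zero_le (#𝒳 ^ k)]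
    _ = _ := by ring

end Incidence

end CurveIncidence

open CurveIncidence in
theorem theorem1_restricted_weak_type_general {r : ℕ} (hr : 1 ≤ r)
    (φ : Fin r → Polynomial ℤ)
    (hdeg : ∀ i, 1 ≤ (φ i).natDegree)
    (s : ℕ) (hs : 2 ≤ s) :
    ∃ C > (0 : ℝ), ∀ (𝒳 : Finset ℕ) (E F : Finset (Fin r → ℤ)),
      E.Nonempty → F.Nonempty →
      (((𝒳 ×ˢ F).filter
          (fun p => (fun i => p.2 i + (φ i).eval (p.1 : ℤ)) ∈ E)).card : ℝ) ^ (2 * s - 1)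
        ≤ C * ((𝒳.card : ℝ) ^ (s - 1) + (𝒳.card : ℝ) *
            ((sSup {m : ℕ | ∃ a : Fin r → ℤ, (∀ j, a j ≠ 0) ∧
              m = (((Fintype.piFinset fun _ : Fin (s - 1) => 𝒳) ×ˢ
                    (Fintype.piFinset fun _ : Fin (s - 1) => 𝒳)).filter
                  (fun q => ∀ j, ∑ i, ((φ j).eval (q.2 i : ℤ) - (φ j).eval (q.1 i : ℤ)) = a j)).card}
              : ℕ) : ℝ))
          * (E.card : ℝ) ^ s * (F.card : ℝ) ^ s := by
  obtain ⟨k, rfl⟩ : ∃ k, s = k + 1 := ⟨s - 1, by omega⟩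
  set d := ∑ j, (φ j).natDegree
  have hfib (𝒳 : Finset ℕ) (j : Fin r) (c : ℤ) : #{n ∈ 𝒳 | (φ j).eval ((n : ℕ) : ℤ) = c} ≤ d :=
    (card_filter_eval_eq_le_natDegree (φ j) (hdeg j) 𝒳 c).trans
      (single_le_sum (f := fun j => (φ j).natDegree) (fun _ _ => Nat.zero_le _) (mem_univ j))
  refine ⟨((r * d + 1) ^ k * (d + 1) : ℕ), by positivity, fun 𝒳 E F _ _ => ?_⟩
  rw [show 2 * (k + 1) - 1 = 2 * k + 1 by omega, Nat.add_sub_cancel, maxSolutions_eval_eq]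
  exact_mod_cast card_incidences_pow_le _ 𝒳 E F hr (hfib 𝒳) k

/-- **Theorem 1 (restricted weak-type form).** For a separated system
`γ = (φ₁, …, φ_r)` which is not a single linear polynomial, and `s ≥ 2`,
there exists `C > 0` (depending only on `s` and `γ`) such that for every finite
`𝒳 ⊆ ℕ` and all nonempty finite `E, F ⊆ ℤ^r`,
`#{(n,x) ∈ 𝒳 × F : x + γ(n) ∈ E}^{2s-1} ≤ C (|𝒳|^{s-1} + |𝒳|·J̃_{s-1}^γ(𝒳)) |E|^s |F|^s`,
where `J̃_{s-1}^γ(𝒳)` is the sup over `a ∈ ℤ^r` with all coordinates nonzero of the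
number of `(m,n) ∈ 𝒳^{s-1} × 𝒳^{s-1}` with `∑ᵢ (φ_j(nᵢ) - φ_j(mᵢ)) = a_j` for all `j`. -/
theorem theorem1_restricted_weak_type {r : ℕ} (hr : 1 ≤ r)
    (φ : Fin r → Polynomial ℤ)
    (hdeg : ∀ i, 1 ≤ (φ i).natDegree)
    (hsep : StrictMono fun i => (φ i).natDegree)
    (hnl : r = 1 → ∀ i, 2 ≤ (φ i).natDegree)
    (s : ℕ) (hs : 2 ≤ s) :
    ∃ C > (0 : ℝ), ∀ (𝒳 : Finset ℕ) (E F : Finset (Fin r → ℤ)),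
      E.Nonempty → F.Nonempty →
      (((𝒳 ×ˢ F).filter
          (fun p => (fun i => p.2 i + (φ i).eval (p.1 : ℤ)) ∈ E)).card : ℝ) ^ (2 * s - 1)
        ≤ C * ((𝒳.card : ℝ) ^ (s - 1) + (𝒳.card : ℝ) *
            ((sSup {m : ℕ | ∃ a : Fin r → ℤ, (∀ j, a j ≠ 0) ∧
              m = (((Fintype.piFinset fun _ : Fin (s - 1) => 𝒳) ×ˢ
                    (Fintype.piFinset fun _ : Fin (s - 1) => 𝒳)).filter
                  (fun q => ∀ j, ∑ i, ((φ j).eval (q.2 i : ℤ) - (φ j).eval (q.1 i : ℤ)) = a j)).card}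
              : ℕ) : ℝ))
          * (E.card : ℝ) ^ s * (F.card : ℝ) ^ s :=
  theorem1_restricted_weak_type_general hr φ hdeg s hs
end

section
/- (Eliminant polynomial; Lemma 2 of Parsell–Wooley as used here) Let γ = (φ_1, …, φ_r) be a separated system of r polynomials, and for s ∈ ℕ and 1 ≤ i ≤ r define σ_{i,s}(X_1, …, X_s) := ∑_{j=1}^s φ_i(X_j) ∈ ℤ[X_1, …, X_s]. Then there exists a nonzero polynomial Q ∈ ℤ[T_1, …, T_r] such that Q(σ_{1,r−1}, …, σ_{r,r−1}) is identically zero as a polynomial in ℤ[X_1, …, X_{r−1}], but Q(σ_{1,r}, …, σ_{r,r}) is not identically zero as a polynomial in ℤ[X_1, …, X_r]. -/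
/-!
The `r` polynomials `σ_{i,r-1}` live in `r - 1` variables, so they are algebraically dependent:
a nonzero `Q` killing them exists because the transcendence degree of `ℤ[X_1, …, X_{r-1}]` is
`r - 1`. The `σ_{i,r}` on the other hand are algebraically independent by the Jacobian criterion:
`∂σ_{i,r}/∂X_j = φ_i'(X_j)`, and `det (φ_i'(X_j))` is nonzero since, the `φ_i'` having distinct
degrees, only the diagonal term of its Leibniz expansion contributes to the coefficient of
`∏_j X_j ^ deg φ_j'`.
-/

theorem Equiv.Perm.eq_one_of_forall_le_comp {σ M : Type*} [Fintype σ] [AddCommMonoid M]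
    [PartialOrder M] [IsOrderedCancelAddMonoid M] {f : σ → M} (hf : Function.Injective f)
    {π : Equiv.Perm σ} (h : ∀ j, f j ≤ f (π j)) : π = 1 := by
  have hsum : ∑ j, f j = ∑ j, f (π j) := (Equiv.sum_comp π f).symm
  rw [Finset.sum_eq_sum_iff_of_le fun j _ => h j] at hsum
  exact Equiv.ext fun j => (hf (hsum j (Finset.mem_univ j))).symm

namespace MvPolynomial

variable {R σ : Type*}

section CommSemiring

variable [CommSemiring R]

theorem coeff_prod_aeval_X [Fintype σ]
    (p : σ → Polynomial R) (m : σ →₀ ℕ) :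
    coeff m (∏ j, Polynomial.aeval (X j : MvPolynomial σ R) (p j)) = ∏ j, (p j).coeff (m j) := by
  classical
  let N : σ → ℕ := fun j => max (p j).natDegree (m j) + 1
  have hexpand (j : σ) : Polynomial.aeval (X j : MvPolynomial σ R) (p j) =
      ∑ k ∈ Finset.range (N j), monomial (Finsupp.single j k) ((p j).coeff k) := by
    rw [Polynomial.aeval_eq_sum_range' (n := N j) (by simp [N])]
    simp only [X_pow_eq_monomial, smul_monomial, smul_eq_mul, mul_one]
  simp_rw [hexpand, Finset.prod_univ_sum, ← monomial_sum_prod, coeff_sum, coeff_monomial]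
  have hsum (t : σ → ℕ) : (∑ j, Finsupp.single j (t j) = m) ↔ t = m := by
    constructor
    · rintro rfl; funext j; simp [Finsupp.single_apply]
    · rintro rfl; exact Finsupp.univ_sum_single m
  simp_rw [hsum]
  rw [Finset.sum_ite_eq', if_pos (by simp [N])]

theorem pderiv_sum_aeval_X [Fintype σ] (p : Polynomial R) (j : σ) :
    pderiv j (∑ k, Polynomial.aeval (X k : MvPolynomial σ R) p) =
      Polynomial.aeval (X j) (Polynomial.derivative p) := by
  classical
  simp [pderiv_X, Pi.single_apply]

theorem pderiv_aeval {ι : Type*} [Fintype ι] (f : ι → MvPolynomial σ R) (j : σ)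
    (Q : MvPolynomial ι R) :
    pderiv j (aeval f Q) = ∑ i, aeval f (pderiv i Q) * pderiv j (f i) := by
  classical
  induction Q using MvPolynomial.induction_on with
  | C a => simp
  | add u v hu hv => simp only [map_add, hu, hv, add_mul, Finset.sum_add_distrib]
  | mul_X u i hu =>
    simp only [map_mul, aeval_X, pderiv_mul, hu, pderiv_X, Pi.single_apply, mul_ite, mul_one,
      mul_zero, map_add, add_mul, Finset.sum_add_distrib, Finset.sum_mul, apply_ite (aeval f),
      map_zero, ite_mul, zero_mul, Finset.sum_ite_eq, Finset.mem_univ, if_true,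
      mul_right_comm _ (f i)]

theorem totalDegree_pderiv_lt {Q : MvPolynomial σ R} {i : σ} (h : pderiv i Q ≠ 0) :
    (pderiv i Q).totalDegree < Q.totalDegree := by
  have hlt : ∀ m ∈ (pderiv i Q).support, (m.sum fun _ e => e) < Q.totalDegree := by
    intro m hm
    rw [mem_support_iff, coeff_pderiv] at hm
    have := le_totalDegree (mem_support_iff.mpr (left_ne_zero_of_mul hm))
    rw [Finsupp.sum_add_index' (fun _ => rfl) (fun _ _ _ => rfl), Finsupp.sum_single_index rfl]
      at this
    omega
  obtain ⟨m, hm⟩ := support_nonempty.mpr h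
  exact (Finset.sup_lt_iff (lt_of_le_of_lt bot_le (hlt m hm))).mpr hlt

theorem exists_pderiv_ne_zero [NoZeroDivisors R] [CharZero R] {Q : MvPolynomial σ R}
    (h : Q.totalDegree ≠ 0) : ∃ i, pderiv i Q ≠ 0 := by
  classical
  obtain ⟨m, hm0, hmQ⟩ : ∃ m ≠ 0, coeff m Q ≠ 0 := by
    by_contra! hQ
    refine h (totalDegree_eq_zero_iff_eq_C.mpr (MvPolynomial.ext _ _ fun m => ?_))
    rw [coeff_C]
    split_ifs with hm
    · rw [hm]
    · exact hQ m (Ne.symm hm)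
  obtain ⟨i, hi⟩ := Finsupp.ne_iff.mp hm0
  refine ⟨i, fun hQ => ?_⟩
  have hsplit : m - Finsupp.single i 1 + Finsupp.single i 1 = m :=
    tsub_add_cancel_of_le (Finsupp.single_le_iff.mpr (Nat.one_le_iff_ne_zero.mpr hi))
  have hmi : (m - Finsupp.single i 1 : σ →₀ ℕ) i + 1 = m i := by
    simpa using DFunLike.congr_fun hsplit i
  have := coeff_pderiv (i := i) Q (m - Finsupp.single i 1)
  rw [hQ, coeff_zero, hsplit, ← Nat.cast_add_one, hmi] at this
  exact mul_ne_zero hmQ (Nat.cast_ne_zero.mpr hi) this.symm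

end CommSemiring

section CommRing

variable [CommRing R]

theorem det_aeval_X_ne_zero [IsDomain R] [Fintype σ] [DecidableEq σ]
    (p : σ → Polynomial R) (hp : ∀ i, p i ≠ 0)
    (hdeg : Function.Injective fun i => (p i).natDegree) :
    (Matrix.of fun i j => Polynomial.aeval (X j : MvPolynomial σ R) (p i)).det ≠ 0 := by
  let m : σ →₀ ℕ := Finsupp.equivFunOnFinite.symm fun j => (p j).natDegree
  have hcoeff (π : Equiv.Perm σ) : coeff m (∏ j, Polynomial.aeval (X j) (p (π j))) =
      if π = 1 then ∏ j, (p j).leadingCoeff else 0 := by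
    rw [coeff_prod_aeval_X]
    split_ifs with hπ
    · subst hπ; rfl
    · refine Finset.prod_eq_zero_iff.mpr ?_
      by_contra! hne
      exact hπ (Equiv.Perm.eq_one_of_forall_le_comp hdeg fun j =>
        Polynomial.le_natDegree_of_ne_zero (hne j (Finset.mem_univ j)))
  intro hdet
  have h := congrArg (coeff m) hdet
  simp only [Matrix.det_apply, Matrix.of_apply, coeff_sum, Units.smul_def, coeff_smul, hcoeff,
    smul_ite, smul_zero, Finset.sum_ite_eq', Finset.mem_univ, if_true, Equiv.Perm.sign_one,
    Units.val_one, one_smul, coeff_zero] at h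
  exact Finset.prod_ne_zero_iff.mpr (fun j _ => Polynomial.leadingCoeff_ne_zero.mpr (hp j)) h

theorem algebraicIndependent_of_det_pderiv_ne_zero [IsDomain R] [CharZero R] [Fintype σ]
    [DecidableEq σ] (f : σ → MvPolynomial σ R)
    (hf : (Matrix.of fun i j => pderiv j (f i)).det ≠ 0) : AlgebraicIndependent R f := by
  rw [algebraicIndependent_iff]
  intro Q
  induction hn : Q.totalDegree using Nat.strong_induction_on generalizing Q with
  | _ n ih =>
  intro hQ
  obtain hdeg | hdeg := eq_or_ne Q.totalDegree 0
  · rw [totalDegree_eq_zero_iff_eq_C] at hdeg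
    rw [hdeg, aeval_C, algebraMap_eq, C_eq_zero] at hQ
    rw [hdeg, hQ, C_0]
  by_contra
  obtain ⟨i, hi⟩ := exists_pderiv_ne_zero hdeg
  have hv : (fun i => aeval f (pderiv i Q)) ≠ 0 := fun h =>
    hi (ih _ (hn ▸ totalDegree_pderiv_lt hi) _ rfl (congrFun h i))
  have hvJ : Matrix.vecMul (fun i => aeval f (pderiv i Q)) (.of fun i j => pderiv j (f i)) = 0 := by
    funext j
    simp only [Matrix.vecMul, dotProduct, Matrix.of_apply, Pi.zero_apply]
    rw [← pderiv_aeval, hQ, map_zero]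
  exact hf (Matrix.exists_vecMul_eq_zero_iff.mp ⟨_, hv, hvJ⟩)

theorem algebraicIndependent_sum_aeval_X [IsDomain R] [CharZero R] [Fintype σ]
    (p : σ → Polynomial R) (hp : ∀ i, 0 < (p i).natDegree)
    (hdeg : Function.Injective fun i => (p i).natDegree) :
    AlgebraicIndependent R fun i => ∑ j, Polynomial.aeval (X j : MvPolynomial σ R) (p i) := by
  classical
  apply algebraicIndependent_of_det_pderiv_ne_zero
  simp_rw [pderiv_sum_aeval_X]
  refine det_aeval_X_ne_zero _ (fun i h => (hp i).ne' (Polynomial.derivative_eq_zero.mp h))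
    fun i j hij => ?_
  simp only [Polynomial.natDegree_derivative] at hij
  exact hdeg (show (p i).natDegree = (p j).natDegree by have := hp i; have := hp j; omega)

theorem not_algebraicIndependent_of_card_lt [IsDomain R] {ι : Type*} [Fintype ι] [Fintype σ]
    (f : ι → MvPolynomial σ R) (h : Fintype.card σ < Fintype.card ι) :
    ¬ AlgebraicIndependent R f :=
  fun hf => h.not_ge (by simpa using hf.lift_cardinalMk_le_trdeg)

end CommRing

end MvPolynomial

open MvPolynomial

/-- **Eliminant polynomial (Lemma 2 of Parsell–Wooley).** For a separated system
`γ = (φ₁, …, φ_r)`, with `σ_{i,s}(X₁, …, X_s) = ∑_{j=1}^s φ_i(X_j)`, there exists a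
nonzero `Q ∈ ℤ[T₁, …, T_r]` with `Q(σ_{1,r-1}, …, σ_{r,r-1}) ≡ 0` but
`Q(σ_{1,r}, …, σ_{r,r}) ≢ 0`. -/
theorem eliminant_polynomial {r : ℕ} (hr : 1 ≤ r)
    (φ : Fin r → Polynomial ℤ)
    (hdeg : ∀ i, 1 ≤ (φ i).natDegree)
    (hsep : StrictMono fun i => (φ i).natDegree) :
    ∃ Q : MvPolynomial (Fin r) ℤ, Q ≠ 0 ∧
      MvPolynomial.aeval
        (fun i => ∑ j : Fin (r - 1),
          Polynomial.aeval (MvPolynomial.X j : MvPolynomial (Fin (r - 1)) ℤ) (φ i)) Q = 0 ∧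
      MvPolynomial.aeval
        (fun i => ∑ j : Fin r,
          Polynomial.aeval (MvPolynomial.X j : MvPolynomial (Fin r) ℤ) (φ i)) Q ≠ 0 := by
  have hdep := not_algebraicIndependent_of_card_lt (R := ℤ) (fun i : Fin r => ∑ j : Fin (r - 1),
    Polynomial.aeval (X j : MvPolynomial (Fin (r - 1)) ℤ) (φ i)) (by simp; omega)
  rw [algebraicIndependent_iff] at hdep
  push Not at hdep
  obtain ⟨Q, hQ, hQ0⟩ := hdep
  have hindep := algebraicIndependent_sum_aeval_X φ hdeg hsep.injective
  exact ⟨Q, hQ0, hQ, fun h => hQ0 (hindep.eq_zero_of_aeval_eq_zero Q h)⟩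
end

section
/- (Base case 2 of the paucity theorem) Let φ_1, φ_2 ∈ ℤ[T] be polynomials with integer coefficients with deg φ_1 = 1 and deg φ_2 ≥ 2, and let 𝒳 ⊆ ℕ. Then for every ε > 0 there exists a constant C = C(φ_1, φ_2, ε) > 0, independent of N and of (a_1, a_2), such that for every N ∈ ℕ and every pair (a_1, a_2) ∈ ℤ^2 with (a_1, a_2) ≠ (0, 0), the number of tuples (m_1, m_2, n_1, n_2) ∈ (𝒳 ∩ [N])^4 satisfying φ_1(m_1) + φ_1(m_2) − φ_1(n_1) − φ_1(n_2) = a_1 and φ_2(m_1) + φ_2(m_2) − φ_2(n_1) − φ_2(n_2) = a_2 is at most C · N^ε · |𝒳 ∩ [N]|. -/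
/-!
Since `φ₁` is linear, the first equation only fixes `t = m₁ + m₂ - n₁ - n₂`. Put
`K(x) = φ₂(x + t) - φ₂(x) - a₂`; it is a nonzero polynomial because `deg φ₂ ≥ 2` and
`(t, a₂) ≠ (0, 0)`. If `m₂ = n₂`, then `n₁` is a root of `K` and `n₂` is free. Otherwise
`e = m₂ - n₂ ≠ 0` divides `K(n₁) = (φ₂(n₁ + t) - φ₂(m₁)) - (φ₂(m₂) - φ₂(n₂))`: either `K(n₁) = 0`,
so `n₁` is one of at most `deg φ₂` roots and `m₁` is free, or `e` is one of `≪ N^ε` divisors of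
`K(n₁) = O(N^{deg φ₂})`. Once `(n₁, m₁)`, resp. `(n₁, e)`, is fixed, `n₂` is a root of the nonzero
polynomial `φ₂(x + e) - φ₂(x) - c`, which leaves at most `deg φ₂` choices.
-/

open Finset Polynomial

section DivisorBound

open Real

lemma nat_succ_le_mul_rpow {ε : ℝ} (hε : 0 < ε) {p : ℝ} (hp : 2 ≤ p) (a : ℕ) :
    (a + 1 : ℝ) ≤ (1 + (ε * log 2)⁻¹) * p ^ (a * ε) := by
  set c := ε * log 2
  have hc : 0 < c := mul_pos hε (log_pos one_lt_two)
  have hexp : 1 + c * a ≤ p ^ (a * ε) := calc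
    1 + c * a ≤ exp (c * a) := by linarith [add_one_le_exp (c * a)]
    _ = 2 ^ (a * ε) := by rw [rpow_def_of_pos two_pos]; congr 1; ring
    _ ≤ p ^ (a * ε) := rpow_le_rpow (by norm_num) hp (by positivity)
  have hinv : c⁻¹ * (1 + c * a) = c⁻¹ + a := by field_simp
  calc (a + 1 : ℝ) ≤ (1 + c⁻¹) * (1 + c * a) := by
        nlinarith [inv_pos.mpr hc, mul_nonneg hc.le (Nat.cast_nonneg a)]
    _ ≤ (1 + c⁻¹) * p ^ (a * ε) := by gcongr

lemma nat_succ_le_rpow {ε p : ℝ} (hp : 0 ≤ p) (h2 : 2 ≤ p ^ ε) (a : ℕ) :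
    (a + 1 : ℝ) ≤ p ^ (a * ε) := calc
  (a + 1 : ℝ) ≤ 2 ^ a := by exact_mod_cast Nat.lt_two_pow_self
  _ ≤ (p ^ ε) ^ a := pow_le_pow_left₀ (by norm_num) h2 a
  _ = p ^ (a * ε) := by rw [← rpow_natCast, ← rpow_mul hp, mul_comm]

lemma Nat.rpow_eq_prod_primeFactors {n : ℕ} (hn : n ≠ 0) (ε : ℝ) :
    (n : ℝ) ^ ε = ∏ p ∈ n.primeFactors, (p : ℝ) ^ (n.factorization p * ε) := by
  conv_lhs => rw [← Nat.prod_factorization_pow_eq_self hn]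
  rw [Finsupp.prod, Nat.support_factorization, Nat.cast_prod,
    ← finsetProd_rpow _ _ fun p _ => by positivity]
  refine prod_congr rfl fun p _ => ?_
  rw [Nat.cast_pow, ← rpow_natCast, ← rpow_mul (Nat.cast_nonneg p)]

/-- Compare `τ(n) = ∏ (aₚ + 1)` with `n ^ ε = ∏ p ^ (aₚ ε)` prime by prime: the factor `aₚ + 1`
exceeds `p ^ (aₚ ε)` only if `p ^ ε < 2`, which happens for fewer than `2 ^ ε⁻¹` primes, and then
by at most the factor `K`. -/
theorem Nat.card_divisors_le_mul_rpow {ε : ℝ} (hε : 0 < ε) :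
    ∃ C > 0, ∀ n : ℕ, (#n.divisors : ℝ) ≤ C * (n : ℝ) ^ ε := by
  set K : ℝ := 1 + (ε * Real.log 2)⁻¹
  have hK : 1 ≤ K := le_add_of_nonneg_right (by have := Real.log_pos one_lt_two; positivity)
  set B := ⌈(2 : ℝ) ^ ε⁻¹⌉₊
  refine ⟨K ^ B, by positivity, fun n => ?_⟩
  rcases eq_or_ne n 0 with rfl | hn
  · simp [zero_rpow hε.ne']
  have hsmall : #{p ∈ n.primeFactors | ((p : ℕ) : ℝ) ^ ε < 2} ≤ B := by
    refine (card_le_card fun p hp => ?_).trans (card_range B).le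
    obtain ⟨-, hp⟩ := mem_filter.mp hp
    rw [mem_range, Nat.lt_ceil, ← rpow_rpow_inv (Nat.cast_nonneg p) hε.ne']
    exact rpow_lt_rpow (by positivity) hp (by positivity)
  rw [Nat.card_divisors hn, Nat.rpow_eq_prod_primeFactors hn]
  push_cast
  calc ∏ p ∈ n.primeFactors, ((n.factorization p : ℝ) + 1)
      ≤ ∏ p ∈ n.primeFactors,
          (if (p : ℝ) ^ ε < 2 then K else 1) * (p : ℝ) ^ (n.factorization p * ε) := by
        refine prod_le_prod (fun _ _ => by positivity) fun p hp => ?_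
        have hp2 : (2 : ℝ) ≤ p := by exact_mod_cast (Nat.prime_of_mem_primeFactors hp).two_le
        split_ifs with h
        · exact nat_succ_le_mul_rpow hε hp2 _
        · rw [one_mul]; exact nat_succ_le_rpow (by positivity) (not_lt.mp h) _
    _ ≤ K ^ B * ∏ p ∈ n.primeFactors, (p : ℝ) ^ (n.factorization p * ε) := by
        rw [prod_mul_distrib, prod_ite, prod_const, prod_const_one, mul_one]
        gcongr

end DivisorBound

theorem Finset.card_le_mul_card_of_injOn_fibers {α β γ : Type*} [DecidableEq β]
    {s : Finset α} {t : Finset β} {f : α → β} (hf : ∀ a ∈ s, f a ∈ t) (g : α → γ)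
    (U : β → Finset γ) {k : ℕ} (hU : ∀ a ∈ s, #(U (f a)) ≤ k) (hg : ∀ a ∈ s, g a ∈ U (f a))
    (hinj : ∀ a ∈ s, ∀ b ∈ s, f a = f b → g a = g b → a = b) : #s ≤ k * #t := by
  refine card_le_mul_card_image_of_maps_to hf k fun b _ => ?_
  rcases (s.filter (f · = b)).eq_empty_or_nonempty with h | ⟨a₀, ha₀⟩
  · simp [h]
  obtain ⟨ha₀s, rfl⟩ := mem_filter.mp ha₀
  refine (card_le_card_of_injOn g (fun a ha => ?_) fun a ha a' ha' hgaa' => ?_).trans (hU a₀ ha₀s)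
  · obtain ⟨has, hfa⟩ := mem_filter.mp ha
    exact hfa ▸ hg a has
  · obtain ⟨has, hfa⟩ := mem_filter.mp ha
    obtain ⟨has', hfa'⟩ := mem_filter.mp ha'
    exact hinj a has a' has' (hfa.trans hfa'.symm) hgaa'

namespace Polynomial

theorem card_filter_isRoot_le {R : Type*} [CommRing R] [IsDomain R] [DecidableEq R]
    {Q : R[X]} (hQ : Q ≠ 0) (s : Finset R) : #{x ∈ s | Q.IsRoot x} ≤ Q.natDegree :=
  card_le_degree_of_subset_roots fun _ hx => (mem_roots hQ).mpr (mem_filter.mp hx).2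

theorem abs_eval_le {R : Type*} [CommRing R] [LinearOrder R] [IsStrictOrderedRing R]
    (φ : R[X]) {r x : R} (hr : 1 ≤ r) (hx : |x| ≤ r) :
    |φ.eval x| ≤ (∑ i ∈ range (φ.natDegree + 1), |φ.coeff i|) * r ^ φ.natDegree := by
  rw [eval_eq_sum_range, sum_mul]
  refine (abs_sum_le_sum_abs _ _).trans (sum_le_sum fun i hi => ?_)
  rw [abs_mul, abs_pow]
  gcongr
  calc |x| ^ i ≤ r ^ i := pow_le_pow_left₀ (abs_nonneg x) hx i
    _ ≤ r ^ φ.natDegree := pow_le_pow_right₀ hr (Nat.lt_succ_iff.mp (mem_range.mp hi))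

theorem eval_add_sub_sub_of_natDegree_eq_one {R : Type*} [CommRing R] {φ : R[X]}
    (hφ : φ.natDegree = 1) (x y z w : R) :
    φ.eval x + φ.eval y - φ.eval z - φ.eval w = φ.leadingCoeff * (x + y - z - w) := by
  have hev (x : R) : φ.eval x = φ.coeff 1 * x + φ.coeff 0 := by
    conv_lhs => rw [eq_X_add_C_of_natDegree_le_one hφ.le]
    simp
  rw [leadingCoeff, hφ, hev x, hev y, hev z, hev w]
  ring

noncomputable def shiftDiff {R : Type*} [CommRing R] (φ : R[X]) (e B : R) : R[X] :=
  φ.comp (X + C e) - φ - C B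

section
variable {R : Type*} [CommRing R]

@[simp]
theorem eval_shiftDiff (φ : R[X]) (e B x : R) :
    (φ.shiftDiff e B).eval x = φ.eval (x + e) - φ.eval x - B := by
  simp [shiftDiff, eval_comp]

theorem natDegree_shiftDiff_le (φ : R[X]) (e B : R) :
    (φ.shiftDiff e B).natDegree ≤ φ.natDegree := by
  refine (natDegree_sub_le _ _).trans
    (max_le ((natDegree_sub_le _ _).trans (max_le ?_ le_rfl)) (by simp))
  rw [← taylor_apply, natDegree_taylor]

theorem shiftDiff_ne_zero [IsDomain R] [CharZero R] {φ : R[X]} (hφ : 2 ≤ φ.natDegree)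
    {e B : R} (heB : ¬(e = 0 ∧ B = 0)) : φ.shiftDiff e B ≠ 0 := by
  intro h
  have hstep (x : R) : φ.eval (x + e) = φ.eval x + B := by
    have := congrArg (eval x) h
    rw [eval_shiftDiff, eval_zero] at this
    linear_combination this
  rcases eq_or_ne e 0 with rfl | he
  · exact heB ⟨rfl, by simpa using hstep 0⟩
  have hmul (k : ℕ) : φ.eval (e * k) = φ.eval 0 + B * k := by
    induction k with
    | zero => simp
    | succ k ih => push_cast; rw [mul_add_one, hstep, ih]; ring
  -- `φ (e X)` would be a linear polynomial, as it agrees with one on `ℕ`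
  have hlin : φ.comp (C e * X) = C B * X + C (φ.eval 0) := by
    refine eq_of_infinite_eval_eq _ _ ((Set.infinite_range_of_injective Nat.cast_injective).mono ?_)
    rintro _ ⟨k, rfl⟩
    simp [eval_comp, hmul, add_comm]
  have := congrArg natDegree hlin
  rw [natDegree_comp, natDegree_C_mul_X e he, mul_one] at this
  have := natDegree_linear_le (a := B) (b := φ.eval 0)
  omega

theorem card_filter_isRoot_shiftDiff_product_le [IsDomain R] [CharZero R] [DecidableEq R]
    {φ : R[X]} (hφ : 2 ≤ φ.natDegree) {D : Finset R} (hD : 0 ∉ D) (G : Finset R) (B : R → R) :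
    #{q ∈ D ×ˢ G | (φ.shiftDiff q.1 (B q.1)).IsRoot q.2} ≤ φ.natDegree * #D := by
  refine card_le_mul_card_of_injOn_fibers (f := Prod.fst)
    (fun q hq => (mem_product.mp (mem_filter.mp hq).1).1) Prod.snd
    (fun e => {y ∈ G | (φ.shiftDiff e (B e)).IsRoot y}) (fun q hq => ?_) (fun q hq => ?_)
    fun q _ q' _ h h' => Prod.ext h h'
  · obtain ⟨hq, -⟩ := mem_filter.mp hq
    have hne : q.1 ≠ 0 := fun h => hD (h ▸ (mem_product.mp hq).1)
    exact (card_filter_isRoot_le (shiftDiff_ne_zero hφ fun h => hne h.1) G).trans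
      (natDegree_shiftDiff_le _ _ _)
  · obtain ⟨hq, hroot⟩ := mem_filter.mp hq
    exact mem_filter.mpr ⟨(mem_product.mp hq).2, hroot⟩

end

end Polynomial

namespace Int

def signedDivisors (n : ℤ) : Finset ℤ :=
  n.natAbs.divisors.image (↑) ∪ n.natAbs.divisors.image fun d : ℕ => -(d : ℤ)

theorem mem_signedDivisors {e n : ℤ} : e ∈ signedDivisors n ↔ e ∣ n ∧ n ≠ 0 := by
  simp only [signedDivisors, mem_union, mem_image, Nat.mem_divisors, ne_eq, natAbs_eq_zero]
  constructor
  · rintro (⟨d, ⟨hd, hn⟩, rfl⟩ | ⟨d, ⟨hd, hn⟩, rfl⟩)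
    · exact ⟨ofNat_dvd_left.mpr hd, hn⟩
    · exact ⟨neg_dvd.mpr (ofNat_dvd_left.mpr hd), hn⟩
  · rintro ⟨he, hn⟩
    have hd : e.natAbs ∣ n.natAbs := natAbs_dvd_natAbs.mpr he
    rcases natAbs_eq e with h | h
    · exact Or.inl ⟨_, ⟨hd, hn⟩, h.symm⟩
    · exact Or.inr ⟨_, ⟨hd, hn⟩, h.symm⟩

theorem card_signedDivisors_le (n : ℤ) : #(signedDivisors n) ≤ 2 * #n.natAbs.divisors :=
  (card_union_le _ _).trans ((add_le_add card_image_le card_image_le).trans (two_mul _).ge)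

end Int

def systemSolutions (φ : ℤ[X]) (G : Finset ℤ) (t a : ℤ) : Finset (ℤ × ℤ × ℤ × ℤ) :=
  {p ∈ G ×ˢ G ×ˢ G ×ˢ G | p.1 + p.2.1 - p.2.2.1 - p.2.2.2 = t ∧
    φ.eval p.1 + φ.eval p.2.1 - φ.eval p.2.2.1 - φ.eval p.2.2.2 = a}

section SystemSolutions

variable {φ : ℤ[X]} {G : Finset ℤ} {t a : ℤ}

@[simp]
theorem mem_systemSolutions {m₁ m₂ n₁ n₂ : ℤ} :
    (m₁, m₂, n₁, n₂) ∈ systemSolutions φ G t a ↔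
      (m₁ ∈ G ∧ m₂ ∈ G ∧ n₁ ∈ G ∧ n₂ ∈ G) ∧ m₁ + m₂ - n₁ - n₂ = t ∧
        φ.eval m₁ + φ.eval m₂ - φ.eval n₁ - φ.eval n₂ = a := by
  simp [systemSolutions]

theorem card_systemSolutions_filter_eq_le (hK : φ.shiftDiff t a ≠ 0) :
    #{p ∈ systemSolutions φ G t a | p.2.1 = p.2.2.2} ≤ φ.natDegree * #G := by
  refine card_le_mul_card_of_injOn_fibers (f := fun p => p.2.2.2) (t := G) ?_
    (fun p => p.2.2.1) (fun _ => {x ∈ G | (φ.shiftDiff t a).IsRoot x})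
    (fun _ _ => (card_filter_isRoot_le hK G).trans (natDegree_shiftDiff_le φ t a)) ?_ ?_
  · rintro ⟨m₁, m₂, n₁, n₂⟩ hp
    simp_all
  · rintro ⟨m₁, m₂, n₁, n₂⟩ hp
    simp only [mem_filter, mem_systemSolutions] at hp
    obtain ⟨⟨⟨-, -, hn₁, -⟩, ht, ha⟩, rfl⟩ := hp
    refine mem_filter.mpr ⟨hn₁, ?_⟩
    rw [IsRoot, eval_shiftDiff, show n₁ + t = m₁ by linarith]
    linarith
  · rintro ⟨m₁, m₂, n₁, n₂⟩ hp ⟨m₁', m₂', n₁', n₂'⟩ hp' (rfl : n₂ = n₂') (rfl : n₁ = n₁')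
    simp only [mem_filter, mem_systemSolutions] at hp hp'
    obtain ⟨⟨-, ht, -⟩, rfl⟩ := hp
    obtain ⟨⟨-, ht', -⟩, rfl⟩ := hp'
    simp only [Prod.mk.injEq, and_true]
    linarith

theorem card_systemSolutions_filter_isRoot_le (hφ : 2 ≤ φ.natDegree) (hK : φ.shiftDiff t a ≠ 0) :
    #{p ∈ systemSolutions φ G t a | p.2.1 ≠ p.2.2.2 ∧ (φ.shiftDiff t a).IsRoot p.2.2.1} ≤
      φ.natDegree ^ 2 * #G := by
  refine (card_le_mul_card_of_injOn_fibers (f := fun p => (p.2.2.1, p.1))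
    (t := {x ∈ G | (φ.shiftDiff t a).IsRoot x} ×ˢ G) ?_ (fun p => p.2.2.2)
    (fun nm => {y ∈ G |
      (φ.shiftDiff (t - (nm.2 - nm.1)) (a - (φ.eval nm.2 - φ.eval nm.1))).IsRoot y})
    (k := φ.natDegree) ?_ ?_ ?_).trans ?_
  · rintro ⟨m₁, m₂, n₁, n₂⟩ hp
    simp_all
  · rintro ⟨m₁, m₂, n₁, n₂⟩ hp
    simp only [mem_filter, mem_systemSolutions] at hp
    obtain ⟨⟨-, ht, -⟩, hne, -⟩ := hp
    refine (card_filter_isRoot_le (shiftDiff_ne_zero hφ fun h => hne ?_) G).trans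
      (natDegree_shiftDiff_le _ _ _)
    linarith [h.1]
  · rintro ⟨m₁, m₂, n₁, n₂⟩ hp
    simp only [mem_filter, mem_systemSolutions] at hp
    obtain ⟨⟨⟨-, -, -, hn₂⟩, ht, ha⟩, -, -⟩ := hp
    refine mem_filter.mpr ⟨hn₂, ?_⟩
    rw [IsRoot, eval_shiftDiff, show n₂ + (t - (m₁ - n₁)) = m₂ by linarith]
    linarith
  · rintro ⟨m₁, m₂, n₁, n₂⟩ hp ⟨m₁', m₂', n₁', n₂'⟩ hp' hf (rfl : n₂ = n₂')
    obtain ⟨rfl, rfl⟩ := Prod.mk.inj hf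
    simp only [mem_filter, mem_systemSolutions] at hp hp'
    simp only [Prod.mk.injEq, and_true, true_and]
    linarith [hp.1.2.1, hp'.1.2.1]
  · rw [card_product, sq, mul_assoc]
    gcongr
    exact (card_filter_isRoot_le hK G).trans (natDegree_shiftDiff_le φ t a)

theorem card_systemSolutions_filter_not_isRoot_le (hφ : 2 ≤ φ.natDegree) {T : ℕ}
    (hT : ∀ p ∈ systemSolutions φ G t a, #((φ.shiftDiff t a).eval p.2.2.1).natAbs.divisors ≤ T) :
    #{p ∈ systemSolutions φ G t a | p.2.1 ≠ p.2.2.2 ∧ ¬(φ.shiftDiff t a).IsRoot p.2.2.1} ≤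
      φ.natDegree * (2 * T) * #G := by
  refine card_le_mul_card_of_injOn_fibers (f := fun p => p.2.2.1) (t := G) ?_
    (fun p => (p.2.1 - p.2.2.2, p.2.2.2))
    (fun n => {q ∈ Int.signedDivisors ((φ.shiftDiff t a).eval n) ×ˢ G |
      (φ.shiftDiff q.1 (a - (φ.eval (n + t - q.1) - φ.eval n))).IsRoot q.2}) ?_ ?_ ?_
  · rintro ⟨m₁, m₂, n₁, n₂⟩ hp
    simp_all
  · rintro ⟨m₁, m₂, n₁, n₂⟩ hp
    simp only [mem_filter] at hp
    have h0 : (0 : ℤ) ∉ Int.signedDivisors ((φ.shiftDiff t a).eval n₁) := fun h0 => by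
      obtain ⟨h, hn⟩ := Int.mem_signedDivisors.mp h0
      exact hn (zero_dvd_iff.mp h)
    refine (card_filter_isRoot_shiftDiff_product_le hφ h0 G
      fun e => a - (φ.eval (n₁ + t - e) - φ.eval n₁)).trans ?_
    gcongr
    exact (Int.card_signedDivisors_le _).trans (by gcongr; exact hT _ hp.1)
  · rintro ⟨m₁, m₂, n₁, n₂⟩ hp
    simp only [mem_filter, mem_systemSolutions] at hp
    obtain ⟨⟨⟨-, -, -, hn₂⟩, ht, ha⟩, -, hK⟩ := hp
    have hm₁ : n₁ + t - (m₂ - n₂) = m₁ := by linarith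
    have hdvd : m₂ - n₂ ∣ (φ.shiftDiff t a).eval n₁ := by
      have h₁ := sub_dvd_eval_sub (n₁ + t) m₁ φ
      rw [show n₁ + t - m₁ = m₂ - n₂ by linarith] at h₁
      have hK_eq : (φ.shiftDiff t a).eval n₁ =
          (φ.eval (n₁ + t) - φ.eval m₁) - (φ.eval m₂ - φ.eval n₂) := by
        rw [eval_shiftDiff]; linarith
      exact hK_eq ▸ dvd_sub h₁ (sub_dvd_eval_sub m₂ n₂ φ)
    refine mem_filter.mpr ⟨mem_product.mpr ⟨Int.mem_signedDivisors.mpr ⟨hdvd, hK⟩, hn₂⟩, ?_⟩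
    rw [IsRoot, eval_shiftDiff, hm₁, show n₂ + (m₂ - n₂) = m₂ by ring]
    linarith
  · rintro ⟨m₁, m₂, n₁, n₂⟩ hp ⟨m₁', m₂', n₁', n₂'⟩ hp' (rfl : n₁ = n₁') hg
    obtain ⟨he, rfl⟩ := Prod.mk.inj hg
    simp only [mem_filter, mem_systemSolutions] at hp hp'
    simp only [Prod.mk.injEq, and_true]
    constructor <;> linarith [hp.1.2.1, hp'.1.2.1]

theorem card_systemSolutions_le (hφ : 2 ≤ φ.natDegree) (hta : ¬(t = 0 ∧ a = 0)) {T : ℕ}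
    (hT : ∀ p ∈ systemSolutions φ G t a, #((φ.shiftDiff t a).eval p.2.2.1).natAbs.divisors ≤ T) :
    #(systemSolutions φ G t a) ≤ (φ.natDegree + φ.natDegree ^ 2 + 2 * φ.natDegree * T) * #G := by
  have hK := shiftDiff_ne_zero hφ hta
  rw [← card_filter_add_card_filter_not (fun p => p.2.1 = p.2.2.2),
    ← card_filter_add_card_filter_not (s := {p ∈ systemSolutions φ G t a | p.2.1 ≠ p.2.2.2})
      (fun p => (φ.shiftDiff t a).IsRoot p.2.2.1), filter_filter, filter_filter]
  have hA := card_systemSolutions_filter_eq_le (G := G) hK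
  have hB := card_systemSolutions_filter_isRoot_le (G := G) hφ hK
  have hC := card_systemSolutions_filter_not_isRoot_le hφ hT
  nlinarith

theorem abs_eval_shiftDiff_le {N : ℤ} (hG : ∀ x ∈ G, 1 ≤ x ∧ x ≤ N) {p : ℤ × ℤ × ℤ × ℤ}
    (hp : p ∈ systemSolutions φ G t a) :
    |(φ.shiftDiff t a).eval p.2.2.1| ≤
      4 * (∑ i ∈ range (φ.natDegree + 1), |φ.coeff i|) * (2 * N) ^ φ.natDegree := by
  obtain ⟨m₁, m₂, n₁, n₂⟩ := p
  obtain ⟨⟨hm₁, hm₂, hn₁, hn₂⟩, ht, ha⟩ := mem_systemSolutions.mp hp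
  have hK_eq : (φ.shiftDiff t a).eval n₁ =
      φ.eval (m₁ + m₂ - n₂) - φ.eval m₁ - φ.eval m₂ + φ.eval n₂ := by
    rw [eval_shiftDiff, show n₁ + t = m₁ + m₂ - n₂ by linarith]; linarith
  obtain ⟨h₁, hN₁⟩ := hG m₁ hm₁
  obtain ⟨h₂, hN₂⟩ := hG m₂ hm₂
  obtain ⟨h₃, hN₃⟩ := hG n₂ hn₂
  have hbound (x : ℤ) (hx : |x| ≤ 2 * N) := abs_le.mp (abs_eval_le φ (by linarith) hx)
  have e₁ := hbound (m₁ + m₂ - n₂) (abs_le.mpr ⟨by linarith, by linarith⟩)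
  have e₂ := hbound m₁ (abs_le.mpr ⟨by linarith, by linarith⟩)
  have e₃ := hbound m₂ (abs_le.mpr ⟨by linarith, by linarith⟩)
  have e₄ := hbound n₂ (abs_le.mpr ⟨by linarith, by linarith⟩)
  rw [hK_eq, abs_le]
  constructor <;> linarith [e₁.1, e₁.2, e₂.1, e₂.2, e₃.1, e₃.2, e₄.1, e₄.2]

end SystemSolutions

theorem exists_card_systemSolutions_le {φ : ℤ[X]} (hφ : 2 ≤ φ.natDegree) {ε : ℝ} (hε : 0 < ε) :
    ∃ C > 0, ∀ (N : ℕ) (G : Finset ℤ), (∀ x ∈ G, 1 ≤ x ∧ x ≤ N) → ∀ t a : ℤ,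
      ¬(t = 0 ∧ a = 0) → (#(systemSolutions φ G t a) : ℝ) ≤ C * (N : ℝ) ^ ε * #G := by
  set d := φ.natDegree
  have hd : (0 : ℝ) < d := by norm_cast; omega
  obtain ⟨Cτ, hCτ, hτ⟩ := Nat.card_divisors_le_mul_rpow (div_pos hε hd)
  set H : ℤ := ∑ i ∈ range (d + 1), |φ.coeff i|
  have hH : 0 ≤ H := sum_nonneg fun i _ => abs_nonneg _
  set D : ℝ := Cτ * (4 * H * 2 ^ d : ℝ) ^ (ε / d)
  have hD : 0 ≤ D := by positivity
  refine ⟨d + d ^ 2 + 2 * d * D, by positivity, fun N G hG t a hta => ?_⟩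
  rcases G.eq_empty_or_nonempty with rfl | ⟨x, hx⟩
  · simp [systemSolutions]
  have hN : (1 : ℝ) ≤ N := by exact_mod_cast (hG x hx).1.trans (hG x hx).2
  have hNε : 1 ≤ (N : ℝ) ^ ε := Real.one_le_rpow hN hε.le
  have hT : ∀ p ∈ systemSolutions φ G t a,
      #((φ.shiftDiff t a).eval p.2.2.1).natAbs.divisors ≤ ⌊D * (N : ℝ) ^ ε⌋₊ := by
    intro p hp
    refine Nat.le_floor ((hτ _).trans ?_)
    have hK : (((φ.shiftDiff t a).eval p.2.2.1).natAbs : ℝ) ≤ 4 * H * 2 ^ d * (N : ℝ) ^ d := by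
      have h := abs_eval_shiftDiff_le (N := N) hG hp
      rw [mul_pow, ← mul_assoc] at h
      rw [Nat.cast_natAbs]
      exact_mod_cast h
    calc Cτ * (((φ.shiftDiff t a).eval p.2.2.1).natAbs : ℝ) ^ (ε / d)
        ≤ Cτ * (4 * H * 2 ^ d * (N : ℝ) ^ d) ^ (ε / d) := by gcongr
      _ = D * (N : ℝ) ^ ε := by
        have hNpow : ((N : ℝ) ^ d) ^ (ε / d) = (N : ℝ) ^ ε := by
          rw [← Real.rpow_natCast, ← Real.rpow_mul (Nat.cast_nonneg _), mul_div_cancel₀ _ hd.ne']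
        rw [Real.mul_rpow (by positivity) (by positivity), hNpow, ← mul_assoc]
  calc (#(systemSolutions φ G t a) : ℝ)
      ≤ (d + d ^ 2 + 2 * d * ⌊D * (N : ℝ) ^ ε⌋₊) * #G := by
        exact_mod_cast card_systemSolutions_le hφ hta hT
    _ ≤ ((d + d ^ 2) * (N : ℝ) ^ ε + 2 * d * (D * (N : ℝ) ^ ε)) * #G := by
        gcongr
        · exact le_mul_of_one_le_right (by positivity) hNε
        · exact Nat.floor_le (by positivity)
    _ = (d + d ^ 2 + 2 * d * D) * (N : ℝ) ^ ε * #G := by ring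

theorem exists_ncard_le_card_systemSolutions {φ₁ φ₂ : ℤ[X]} (hφ₁ : φ₁.natDegree = 1)
    {s : Set ℕ} {G : Finset ℤ} (hG : ∀ n ∈ s, (n : ℤ) ∈ G) {a₁ a₂ : ℤ}
    (ha : ¬(a₁ = 0 ∧ a₂ = 0)) :
    ∃ t : ℤ, ¬(t = 0 ∧ a₂ = 0) ∧
      Set.ncard {p : ℕ × ℕ × ℕ × ℕ | p.1 ∈ s ∧ p.2.1 ∈ s ∧ p.2.2.1 ∈ s ∧ p.2.2.2 ∈ s ∧
          φ₁.eval (p.1 : ℤ) + φ₁.eval (p.2.1 : ℤ)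
            - φ₁.eval (p.2.2.1 : ℤ) - φ₁.eval (p.2.2.2 : ℤ) = a₁ ∧
          φ₂.eval (p.1 : ℤ) + φ₂.eval (p.2.1 : ℤ)
            - φ₂.eval (p.2.2.1 : ℤ) - φ₂.eval (p.2.2.2 : ℤ) = a₂}
        ≤ #(systemSolutions φ₂ G t a₂) := by
  set S := {p : ℕ × ℕ × ℕ × ℕ | p.1 ∈ s ∧ p.2.1 ∈ s ∧ p.2.2.1 ∈ s ∧ p.2.2.2 ∈ s ∧
          φ₁.eval (p.1 : ℤ) + φ₁.eval (p.2.1 : ℤ)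
            - φ₁.eval (p.2.2.1 : ℤ) - φ₁.eval (p.2.2.2 : ℤ) = a₁ ∧
          φ₂.eval (p.1 : ℤ) + φ₂.eval (p.2.1 : ℤ)
            - φ₂.eval (p.2.2.1 : ℤ) - φ₂.eval (p.2.2.2 : ℤ) = a₂}
  rcases S.eq_empty_or_nonempty with hS | ⟨⟨m₁, m₂, n₁, n₂⟩, -, -, -, -, hq, -⟩
  · exact ⟨1, by simp, by simp [hS]⟩
  have hlc : φ₁.leadingCoeff ≠ 0 :=
    leadingCoeff_ne_zero.mpr (ne_zero_of_natDegree_gt (hφ₁ ▸ zero_lt_one))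
  have hlin := eval_add_sub_sub_of_natDegree_eq_one hφ₁
  refine ⟨m₁ + m₂ - n₁ - n₂, fun ⟨ht, ha₂⟩ => ha ⟨?_, ha₂⟩, ?_⟩
  · rw [← hq, hlin, ht, mul_zero]
  rw [← Set.ncard_coe_finset]
  refine Set.ncard_le_ncard_of_injOn
    (fun p => ((p.1 : ℤ), (p.2.1 : ℤ), (p.2.2.1 : ℤ), (p.2.2.2 : ℤ))) ?_ ?_ (finite_toSet _)
  · rintro ⟨m₁', m₂', n₁', n₂'⟩ ⟨h₁, h₂, h₃, h₄, hq', hq₂⟩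
    refine mem_systemSolutions.mpr ⟨⟨hG _ h₁, hG _ h₂, hG _ h₃, hG _ h₄⟩, ?_, hq₂⟩
    apply mul_left_cancel₀ hlc
    rw [← hlin, ← hlin, hq', hq]
  · rintro ⟨m₁', m₂', n₁', n₂'⟩ - ⟨m₁'', m₂'', n₁'', n₂''⟩ - h
    simpa only [Prod.mk.injEq, Nat.cast_inj] using h

/-- **Base case 2 of the paucity theorem.** For `φ₁, φ₂ ∈ ℤ[T]` with `deg φ₁ = 1`
and `deg φ₂ ≥ 2`, and `𝒳 ⊆ ℕ`: for every `ε > 0` there is `C > 0` (independent of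
`N` and `(a₁, a₂)`) such that for all `N ∈ ℕ` and all `(a₁, a₂) ∈ ℤ² \ {(0,0)}`, the
number of `(m₁, m₂, n₁, n₂) ∈ (𝒳 ∩ [N])⁴` with
`φ₁(m₁) + φ₁(m₂) − φ₁(n₁) − φ₁(n₂) = a₁` and `φ₂(m₁) + φ₂(m₂) − φ₂(n₁) − φ₂(n₂) = a₂`
is at most `C · N^ε · |𝒳 ∩ [N]|`. -/
theorem base_case_two (φ₁ φ₂ : Polynomial ℤ)
    (hφ₁ : φ₁.natDegree = 1) (hφ₂ : 2 ≤ φ₂.natDegree) (𝒳 : Set ℕ) :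
    ∀ ε > (0 : ℝ), ∃ C > (0 : ℝ), ∀ (N : ℕ) (a₁ a₂ : ℤ), ¬(a₁ = 0 ∧ a₂ = 0) →
      (Set.ncard {p : ℕ × ℕ × ℕ × ℕ |
          p.1 ∈ 𝒳 ∩ Set.Icc 1 N ∧ p.2.1 ∈ 𝒳 ∩ Set.Icc 1 N ∧
          p.2.2.1 ∈ 𝒳 ∩ Set.Icc 1 N ∧ p.2.2.2 ∈ 𝒳 ∩ Set.Icc 1 N ∧
          φ₁.eval (p.1 : ℤ) + φ₁.eval (p.2.1 : ℤ)
            - φ₁.eval (p.2.2.1 : ℤ) - φ₁.eval (p.2.2.2 : ℤ) = a₁ ∧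
          φ₂.eval (p.1 : ℤ) + φ₂.eval (p.2.1 : ℤ)
            - φ₂.eval (p.2.2.1 : ℤ) - φ₂.eval (p.2.2.2 : ℤ) = a₂} : ℝ)
        ≤ C * (N : ℝ) ^ ε * ((𝒳 ∩ Set.Icc 1 N).ncard : ℝ) := by
  intro ε hε
  obtain ⟨C, hC, hbound⟩ := exists_card_systemSolutions_le hφ₂ hε
  refine ⟨C, hC, fun N a₁ a₂ ha => ?_⟩
  classical
  set G : Finset ℤ := {n ∈ Finset.Icc 1 N | n ∈ 𝒳}.image (↑)
  have hG : ∀ n ∈ 𝒳 ∩ Set.Icc 1 N, (n : ℤ) ∈ G := fun n hn =>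
    mem_image_of_mem _ (by simpa [and_comm] using hn)
  have hG_Icc : ∀ x ∈ G, 1 ≤ x ∧ x ≤ N := by
    simp only [G, mem_image, mem_filter, Finset.mem_Icc]
    rintro _ ⟨n, ⟨⟨h₁, h₂⟩, -⟩, rfl⟩
    exact ⟨by exact_mod_cast h₁, by exact_mod_cast h₂⟩
  have hG_card : #G = (𝒳 ∩ Set.Icc 1 N).ncard := by
    rw [card_image_of_injective _ Nat.cast_injective, ← Set.ncard_coe_finset]
    congr 1
    ext
    simp only [coe_filter, Finset.mem_Icc, Set.mem_ofPred_eq, Set.mem_inter_iff, Set.mem_Icc]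
    tauto
  obtain ⟨t, hta, hcount⟩ := exists_ncard_le_card_systemSolutions hφ₁ hG ha
  calc _ ≤ (#(systemSolutions φ₂ G t a₂) : ℝ) := by exact_mod_cast hcount
    _ ≤ C * (N : ℝ) ^ ε * #G := hbound N G hG_Icc t a₂ hta
    _ = _ := by rw [hG_card]
end

section
/- (Vandermonde factorization of the Wronskian-type determinant; the algebraic part of Lemma 1 of Parsell–Wooley) Let γ = (φ_1, …, φ_r) be a separated system of r polynomials. Then the Vandermonde polynomial V_r(X_1, …, X_r) = ∏_{1 ≤ i < j ≤ r} (X_j − X_i) divides the determinant det( φ_i′(X_j) )_{1 ≤ i, j ≤ r} in ℤ[X_1, …, X_r], and the quotient P, defined by det( φ_i′(X_j) )_{i, j ∈ [r]} = V_r(X_1, …, X_r) · P(X_1, …, X_r), is a nonzero polynomial of total degree ∑_{i=1}^r ( deg φ_i − i ). -/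
/-!
Identifying `X_b` with `X_a` makes columns `a` and `b` of `(φ_i'(X_j))` equal, so every
`X_b - X_a` divides the determinant; these are pairwise non-associated primes, hence their
product, the Vandermonde polynomial, divides it as well. The coefficient of `∏ X_j ^ m_j` in the
determinant is `det ((φ_i').coeff (m_j))`; for `m_j = deg φ_j'` strict monotonicity of the degrees
makes this matrix lower triangular, so the coefficient is `∏ lc(φ_i') ≠ 0`, in the largest
possible total degree `∑ deg φ_i'`. Total degrees add in the domain `ℤ[X_1, …, X_r]`, and the
Vandermonde polynomial is homogeneous of degree `∑ (i - 1)`.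
-/

open MvPolynomial Finset
open scoped Polynomial

theorem MvPolynomial.coeff_prod_aeval_X_s15 {ι R : Type*} [Fintype ι] [CommSemiring R]
    (p : ι → R[X]) (m : ι →₀ ℕ) :
    coeff m (∏ i, Polynomial.aeval (X i : MvPolynomial ι R) (p i)) =
      ∏ i, (p i).coeff (m i) := by
  classical
  have hmon (i : ι) : Polynomial.aeval (X i : MvPolynomial ι R) (p i) =
      ∑ k ∈ (p i).support, monomial (Finsupp.single i k) ((p i).coeff k) := by
    conv_lhs => rw [(p i).as_sum_support]
    simp [monomial_eq, Finsupp.prod_single_index]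
  have hsingle (x : ι → ℕ) : ∑ i, Finsupp.single i (x i) = m ↔ x = m := by
    rw [← Finsupp.equivFunOnFinite_symm_eq_sum, Equiv.symm_apply_eq]
    rfl
  simp_rw [hmon, prod_univ_sum, ← monomial_sum_prod, coeff_sum, coeff_monomial, hsingle,
    sum_ite_eq']
  split_ifs with hm
  · rfl
  · simp only [Fintype.mem_piFinset, Polynomial.mem_support_iff, not_forall, not_not] at hm
    obtain ⟨i, hi⟩ := hm
    exact (prod_eq_zero (mem_univ i) hi).symm

theorem Fin.val_le_of_strictMono {n : ℕ} {f : Fin n → ℕ} (hf : StrictMono f) (i : Fin n) :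
    (i : ℕ) ≤ f i := by
  obtain ⟨k, hk⟩ := i
  induction k with
  | zero => exact Nat.zero_le _
  | succ k ih => exact (ih (by omega)).trans_lt (hf (Fin.mk_lt_mk.mpr k.lt_succ_self))

theorem Fin.card_filter_fst_lt_snd (n : ℕ) :
    #{p : Fin n × Fin n | p.1 < p.2} = ∑ i : Fin n, (i : ℕ) := by
  rw [card_filter, Fintype.sum_prod_type_right]
  simp [sum_boole, filter_gt_eq_Iio]

section Alternant

variable {ι R : Type*} [Fintype ι] [DecidableEq ι] [CommRing R]

noncomputable def alternant (q : ι → R[X]) : Matrix ι ι (MvPolynomial ι R) :=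
  Matrix.of fun i j => Polynomial.aeval (X j) (q i)

theorem coeff_det_alternant (q : ι → R[X]) (m : ι →₀ ℕ) :
    coeff m (alternant q).det = (Matrix.of fun i j => (q i).coeff (m j)).det := by
  simp only [Matrix.det_apply, coeff_sum, Units.smul_def, coeff_smul, alternant, Matrix.of_apply,
    coeff_prod_aeval_X_s15]

theorem totalDegree_det_alternant_le (q : ι → R[X]) :
    (alternant q).det.totalDegree ≤ ∑ i, (q i).natDegree := by
  refine Finset.sup_le fun m hm => ?_
  rw [mem_support_iff, coeff_det_alternant, Matrix.det_apply] at hm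
  obtain ⟨σ, -, hσ⟩ := exists_ne_zero_of_sum_ne_zero hm
  have hcoeff (i : ι) : (q (σ i)).coeff (m i) ≠ 0 := fun h =>
    hσ (by rw [prod_eq_zero (mem_univ i) h, smul_zero])
  calc (m.sum fun _ e => e) = ∑ i, m i := Finsupp.sum_fintype _ _ fun _ => rfl
    _ ≤ ∑ i, (q (σ i)).natDegree :=
        sum_le_sum fun i _ => Polynomial.le_natDegree_of_ne_zero (hcoeff i)
    _ = ∑ i, (q i).natDegree := Equiv.sum_comp σ fun i => (q i).natDegree

theorem coeff_det_alternant_natDegree [LinearOrder ι] {q : ι → R[X]}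
    (hq : StrictMono fun i => (q i).natDegree) :
    coeff (Finsupp.equivFunOnFinite.symm fun i => (q i).natDegree) (alternant q).det =
      ∏ i, (q i).leadingCoeff := by
  rw [coeff_det_alternant, Matrix.det_of_isLowerTriangular]
  · rfl
  · intro i j hij
    exact Polynomial.coeff_eq_zero_of_natDegree_lt (hq hij)

variable [IsDomain R] [LinearOrder ι] {q : ι → R[X]}

theorem mem_support_det_alternant (hq0 : ∀ i, q i ≠ 0)
    (hq : StrictMono fun i => (q i).natDegree) :
    Finsupp.equivFunOnFinite.symm (fun i => (q i).natDegree) ∈ (alternant q).det.support := by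
  rw [mem_support_iff, coeff_det_alternant_natDegree hq]
  exact prod_ne_zero_iff.mpr fun i _ => Polynomial.leadingCoeff_ne_zero.mpr (hq0 i)

theorem det_alternant_ne_zero (hq0 : ∀ i, q i ≠ 0) (hq : StrictMono fun i => (q i).natDegree) :
    (alternant q).det ≠ 0 :=
  fun h => by simpa [h] using mem_support_det_alternant hq0 hq

theorem totalDegree_det_alternant (hq0 : ∀ i, q i ≠ 0)
    (hq : StrictMono fun i => (q i).natDegree) :
    (alternant q).det.totalDegree = ∑ i, (q i).natDegree := by
  refine le_antisymm (totalDegree_det_alternant_le q) ?_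
  simpa [Finsupp.sum_fintype] using le_totalDegree (mem_support_det_alternant hq0 hq)

end Alternant

section Vandermonde

variable {σ R : Type*} [CommRing R]

theorem MvPolynomial.prime_X_sub_X [IsDomain R] {a b : σ} (hab : a ≠ b) :
    Prime (X b - X a : MvPolynomial σ R) := by
  classical
  let Ψ := (renameEquiv R (Equiv.optionSubtypeNe b).symm).trans
    (optionEquivLeft R {k : σ // k ≠ b})
  have hb : Ψ (X b) = Polynomial.X := by
    simp [Ψ, optionEquivLeft_X_none]
  have ha : Ψ (X a) = Polynomial.C (X ⟨a, hab⟩) := by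
    simp [Ψ, Equiv.optionSubtypeNe_symm_of_ne hab, optionEquivLeft_X_some]
  rw [← MulEquiv.prime_iff Ψ.toMulEquiv]
  simpa [hb, ha] using Polynomial.prime_X_sub_C (X ⟨a, hab⟩ : MvPolynomial {k // k ≠ b} R)

theorem MvPolynomial.dvd_sub_rename {d : MvPolynomial σ R} {τ : σ → σ}
    (h : ∀ k, d ∣ X k - X (τ k)) (f : MvPolynomial σ R) : d ∣ f - rename τ f := by
  induction f using MvPolynomial.induction_on with
  | C c => simp
  | add f g hf hg => simpa only [map_add, add_sub_add_comm] using dvd_add hf hg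
  | mul_X f k hf =>
    have : f * X k - rename τ (f * X k) =
        (f - rename τ f) * X k + rename τ f * (X k - X (τ k)) := by
      rw [map_mul, rename_X]
      ring
    rw [this]
    exact dvd_add (dvd_mul_of_dvd_left hf _) (dvd_mul_of_dvd_right (h k) _)

theorem MvPolynomial.isRelPrime_X_sub_X [IsDomain R] [LinearOrder σ] {a b c d : σ}
    (hab : a < b) (hcd : c < d) (hne : (a, b) ≠ (c, d)) :
    IsRelPrime (X b - X a : MvPolynomial σ R) (X d - X c) := by
  refine ((prime_X_sub_X hab.ne).irreducible.dvd_or_isRelPrime).resolve_left ?_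
  rintro ⟨f, hf⟩
  have := congrArg (rename (Function.update id b a)) hf
  simp [Function.update_apply, hab.ne, sub_eq_zero, X_inj] at this
  grind

variable [Fintype σ]

variable (σ R) in
noncomputable def vandermondePoly [LinearOrder σ] : MvPolynomial σ R :=
  ∏ p ∈ univ.filter (fun p : σ × σ => p.1 < p.2), (X p.2 - X p.1)

variable [LinearOrder σ]

theorem vandermondePoly_ne_zero [IsDomain R] : vandermondePoly σ R ≠ 0 :=
  prod_ne_zero_iff.mpr fun _ hp => (prime_X_sub_X (mem_filter.mp hp).2.ne).ne_zero

theorem totalDegree_vandermondePoly [IsDomain R] :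
    (vandermondePoly σ R).totalDegree = #{p : σ × σ | p.1 < p.2} := by
  have hhom : (vandermondePoly σ R).IsHomogeneous
      (∑ p ∈ univ.filter (fun p : σ × σ => p.1 < p.2), 1) :=
    IsHomogeneous.prod _ _ _ fun p _ => (isHomogeneous_X R p.2).sub (isHomogeneous_X R p.1)
  rw [hhom.totalDegree vandermondePoly_ne_zero, card_eq_sum_ones]

theorem X_sub_X_dvd_det_alternant (q : σ → R[X]) {a b : σ} (hab : a ≠ b) :
    X b - X a ∣ (alternant q).det := by
  have hτ (k : σ) : (X b - X a : MvPolynomial σ R) ∣ X k - X (Function.update id b a k) := by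
    by_cases hk : k = b <;> simp [hk]
  have hcol : rename (Function.update id b a) (alternant q).det = 0 := by
    rw [AlgHom.map_det]
    refine Matrix.det_zero_of_column_eq hab fun i => ?_
    simp [alternant, ← Polynomial.aeval_algHom_apply, hab]
  simpa [hcol] using dvd_sub_rename hτ (alternant q).det

theorem vandermondePoly_dvd_det_alternant [IsDomain R] [UniqueFactorizationMonoid R]
    (q : σ → R[X]) : vandermondePoly σ R ∣ (alternant q).det := by
  refine prod_dvd_of_isRelPrime (fun p hp p' hp' hne => ?_) fun p hp => ?_
  · simp only [coe_filter, mem_univ, true_and, Set.mem_ofPred_eq] at hp hp'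
    exact isRelPrime_X_sub_X hp hp' hne
  · exact X_sub_X_dvd_det_alternant q (mem_filter.mp hp).2.ne

end Vandermonde

theorem vandermonde_factorization_general {r : ℕ}
    (φ : Fin r → Polynomial ℤ)
    (hdeg : ∀ i, 1 ≤ (φ i).natDegree)
    (hsep : StrictMono fun i => (φ i).natDegree) :
    ∃ P : MvPolynomial (Fin r) ℤ,
      Matrix.det (Matrix.of fun i j : Fin r =>
          Polynomial.aeval (MvPolynomial.X j : MvPolynomial (Fin r) ℤ)
            (Polynomial.derivative (φ i)))
        = (∏ p ∈ Finset.univ.filter (fun p : Fin r × Fin r => p.1 < p.2),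
            (MvPolynomial.X p.2 - MvPolynomial.X p.1)) * P ∧
      P ≠ 0 ∧
      P.totalDegree = ∑ i : Fin r, ((φ i).natDegree - ((i : ℕ) + 1)) := by
  set q := fun i => Polynomial.derivative (φ i)
  have hq_natDegree (i : Fin r) : (q i).natDegree = (φ i).natDegree - 1 :=
    Polynomial.natDegree_derivative _
  have hq0 (i : Fin r) : q i ≠ 0 := fun h => by
    have := Polynomial.derivative_eq_zero.mp h
    have := hdeg i
    omega
  have hq : StrictMono fun i => (q i).natDegree := fun i j hij => by
    simp only [hq_natDegree]
    exact Nat.sub_lt_sub_right (hdeg i) (hsep hij)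
  obtain ⟨P, hP⟩ := vandermondePoly_dvd_det_alternant q
  have hP0 : P ≠ 0 := right_ne_zero_of_mul (hP ▸ det_alternant_ne_zero hq0 hq)
  refine ⟨P, hP, hP0, ?_⟩
  have hdegree := congrArg totalDegree hP
  rw [totalDegree_mul_of_isDomain vandermondePoly_ne_zero hP0, totalDegree_det_alternant hq0 hq,
    totalDegree_vandermondePoly, Fin.card_filter_fst_lt_snd] at hdegree
  rw [show P.totalDegree = ∑ i, (q i).natDegree - ∑ i : Fin r, (i : ℕ) by omega,
    ← sum_tsub_distrib _ fun i _ => Fin.val_le_of_strictMono hq i]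
  simp only [hq_natDegree, Nat.sub_sub, add_comm 1]

/-- **Vandermonde factorization of the Wronskian-type determinant (algebraic part of
Lemma 1 of Parsell–Wooley).** For a separated system `γ = (φ₁, …, φ_r)`, the
Vandermonde polynomial `∏_{i<j} (X_j − X_i)` divides `det(φ_i′(X_j))` in
`ℤ[X₁, …, X_r]`, and the quotient `P` is a nonzero polynomial of total degree
`∑_{i=1}^r (deg φ_i − i)`. -/
theorem vandermonde_factorization {r : ℕ} (hr : 1 ≤ r)
    (φ : Fin r → Polynomial ℤ)
    (hdeg : ∀ i, 1 ≤ (φ i).natDegree)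
    (hsep : StrictMono fun i => (φ i).natDegree) :
    ∃ P : MvPolynomial (Fin r) ℤ,
      Matrix.det (Matrix.of fun i j : Fin r =>
          Polynomial.aeval (MvPolynomial.X j : MvPolynomial (Fin r) ℤ)
            (Polynomial.derivative (φ i)))
        = (∏ p ∈ Finset.univ.filter (fun p : Fin r × Fin r => p.1 < p.2),
            (MvPolynomial.X p.2 - MvPolynomial.X p.1)) * P ∧
      P ≠ 0 ∧
      P.totalDegree = ∑ i : Fin r, ((φ i).natDegree - ((i : ℕ) + 1)) :=
  vandermonde_factorization_general φ hdeg hsep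
end
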